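/- arXiv:2207.02581 — 3 statements merged into one kernel-verified Lean document; each statement's English description precedes it below -/
import Mathlib

section
/- Fix t ∈ ℕ and let M be the lazy random walk matrix of a d-regular graph G on n vertices admitting a (k,φ,ε)-clustering with η = minᵢ|Cᵢ|/maxᵢ|Cᵢ|. If t ≥ 20·log n/φ², then for every vertex x ∈ V, the ℓ₂-norm of the t-step random walk distribution started at x satisfies ‖Mᵗ𝟙ₓ‖₂ ≤ O((k/√η)·n^{−1/2 + 20ε/φ²}). -/
open Matrix

/-- Number of (ordered) edges of `G` running between `A` and `B`; for disjoint
`A`, `B` this is `|E(A,B)|`. -/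
def eCount {n : ℕ} (G : SimpleGraph (Fin n)) [DecidableRel G.Adj]
    (A B : Finset (Fin n)) : ℕ :=
  ∑ x ∈ A, ∑ y ∈ B, if G.Adj x y then 1 else 0

/-- The lazy random walk matrix `M = (I + A_G/d)/2` of a `d`-regular graph. -/
noncomputable def lazyWalk {n : ℕ} (G : SimpleGraph (Fin n)) [DecidableRel G.Adj]
    (d : ℕ) : Matrix (Fin n) (Fin n) ℝ :=
  (2 : ℝ)⁻¹ • ((1 : Matrix (Fin n) (Fin n) ℝ) + (d : ℝ)⁻¹ • G.adjMatrix ℝ)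

namespace Stmt16

open Finset

variable {n : ℕ} (G : SimpleGraph (Fin n)) [DecidableRel G.Adj]

/-- Dirichlet form over a finset `C` (ordered pairs). -/
def dform (C : Finset (Fin n)) (f : Fin n → ℝ) : ℝ :=
  ∑ u ∈ C, ∑ v ∈ C, if G.Adj u v then (f u - f v) ^ 2 else 0

/-- Co-area type form. -/
def eform (C : Finset (Fin n)) (f : Fin n → ℝ) : ℝ :=
  ∑ u ∈ C, ∑ v ∈ C, if G.Adj u v then |f u ^ 2 - f v ^ 2| else 0

lemma dform_nonneg (C : Finset (Fin n)) (f : Fin n → ℝ) : 0 ≤ dform G C f := by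
  refine Finset.sum_nonneg fun u _ => Finset.sum_nonneg fun v _ => ?_
  split <;> positivity

lemma eform_nonneg (C : Finset (Fin n)) (f : Fin n → ℝ) : 0 ≤ eform G C f := by
  refine Finset.sum_nonneg fun u _ => Finset.sum_nonneg fun v _ => ?_
  split <;> positivity

/-- The lazy walk applied to a vector, pointwise. -/
lemma lazy_apply (d : ℕ) (p : Fin n → ℝ) (v : Fin n) :
    (lazyWalk G d).mulVec p v
      = 2⁻¹ * (p v + (d : ℝ)⁻¹ * ∑ u ∈ G.neighborFinset v, p u) := by
  simp [lazyWalk, Matrix.smul_mulVec, Matrix.add_mulVec, Matrix.one_mulVec,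
    Matrix.smul_mulVec, smul_eq_mul]
  ring

/-- Handshake-type swap. -/
lemma swap_nbr (F : Fin n → ℝ) :
    ∑ v : Fin n, ∑ u ∈ G.neighborFinset v, F u
      = ∑ u : Fin n, (G.degree u : ℝ) * F u := by
  have h1 : ∀ v : Fin n, ∑ u ∈ G.neighborFinset v, F u
      = ∑ u : Fin n, if G.Adj v u then F u else 0 := by
    intro v
    rw [SimpleGraph.neighborFinset_eq_filter, Finset.sum_filter]
  simp_rw [h1]
  rw [Finset.sum_comm]
  refine Finset.sum_congr rfl fun u _ => ?_
  have h2 : ∀ v : Fin n, (if G.Adj v u then F u else 0) = (if G.Adj u v then F u else 0) := by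
    intro v; simp [G.adj_comm]
  simp_rw [h2]
  rw [Finset.sum_ite, Finset.sum_const, Finset.sum_const_zero, add_zero,
    SimpleGraph.degree]
  simp [SimpleGraph.neighborFinset_eq_filter, mul_comm]


/-- ℓ² energy. -/
def S2 (f : Fin n → ℝ) : ℝ := ∑ v : Fin n, f v ^ 2

variable {G}

lemma lazy_nonneg (d : ℕ) (p : Fin n → ℝ) (hp : ∀ v, 0 ≤ p v) (v : Fin n) :
    0 ≤ (lazyWalk G d).mulVec p v := by
  rw [lazy_apply]
  have h1 : (0:ℝ) ≤ ∑ u ∈ G.neighborFinset v, p u := Finset.sum_nonneg fun u _ => hp u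
  have h2 := hp v
  positivity

lemma lazy_sum {d : ℕ} (hreg : G.IsRegularOfDegree d) (hd : 0 < d) (p : Fin n → ℝ) :
    ∑ v : Fin n, (lazyWalk G d).mulVec p v = ∑ v : Fin n, p v := by
  simp_rw [lazy_apply]
  rw [← Finset.mul_sum, Finset.sum_add_distrib, ← Finset.mul_sum, swap_nbr]
  have : ∀ u : Fin n, (G.degree u : ℝ) * p u = d * p u := by
    intro u; rw [hreg u]
  simp_rw [this, ← Finset.mul_sum]
  have hd' : (d:ℝ) ≠ 0 := by positivity
  field_simp
  ring

/-- One step of the lazy walk does not increase energy, and decreases it by the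
Dirichlet form amount. -/
lemma lazy_step {d : ℕ} (hreg : G.IsRegularOfDegree d) (hd : 0 < d) (p : Fin n → ℝ) :
    S2 ((lazyWalk G d).mulVec p) ≤ S2 p - ((4:ℝ) * d)⁻¹ * dform G Finset.univ p := by
  classical
  set w : Fin n → ℝ := fun v => (d : ℝ)⁻¹ * ∑ u ∈ G.neighborFinset v, p u with hw
  have hd' : (0:ℝ) < d := by exact_mod_cast hd
  -- S2 w ≤ S2 p
  have hS2w : S2 w ≤ S2 p := by
    have hpt : ∀ v : Fin n, w v ^ 2 ≤ (d:ℝ)⁻¹ * ∑ u ∈ G.neighborFinset v, p u ^ 2 := by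
      intro v
      have hcs : (∑ u ∈ G.neighborFinset v, p u) ^ 2
          ≤ (G.neighborFinset v).card * ∑ u ∈ G.neighborFinset v, p u ^ 2 :=
        sq_sum_le_card_mul_sum_sq
      have hcard : ((G.neighborFinset v).card : ℝ) = d := by
        exact_mod_cast congrArg Nat.cast (hreg v)
      rw [hw, mul_pow]
      rw [hcard] at hcs
      calc ((d:ℝ)⁻¹) ^ 2 * (∑ u ∈ G.neighborFinset v, p u) ^ 2
          ≤ ((d:ℝ)⁻¹) ^ 2 * ((d:ℝ) * ∑ u ∈ G.neighborFinset v, p u ^ 2) := by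
            apply mul_le_mul_of_nonneg_left hcs (by positivity)
        _ = (d:ℝ)⁻¹ * ∑ u ∈ G.neighborFinset v, p u ^ 2 := by
            field_simp
    calc S2 w ≤ ∑ v : Fin n, (d:ℝ)⁻¹ * ∑ u ∈ G.neighborFinset v, p u ^ 2 :=
          Finset.sum_le_sum fun v _ => hpt v
      _ = (d:ℝ)⁻¹ * ∑ v : Fin n, ∑ u ∈ G.neighborFinset v, p u ^ 2 := by
          rw [Finset.mul_sum]
      _ = (d:ℝ)⁻¹ * ∑ u : Fin n, (G.degree u : ℝ) * p u ^ 2 := by rw [swap_nbr]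
      _ = S2 p := by
          have : ∀ u : Fin n, (G.degree u : ℝ) * p u ^ 2 = d * p u ^ 2 := by
            intro u; rw [hreg u]
          simp_rw [this, ← Finset.mul_sum, S2]
          field_simp
  -- inner product identity
  have hrow : ∀ (c : ℝ) (v : Fin n), ∑ u : Fin n, (if G.Adj v u then c else 0) = d * c := by
    intro c v
    rw [Finset.sum_ite, Finset.sum_const, Finset.sum_const_zero, add_zero]
    have hc : (Finset.univ.filter (G.Adj v)).card = d := by
      rw [← SimpleGraph.neighborFinset_eq_filter]; exact hreg v
    rw [hc, nsmul_eq_mul]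
  have hinner : ∑ v : Fin n, p v * w v = S2 p - ((2:ℝ) * d)⁻¹ * dform G Finset.univ p := by
    have key : ∀ v : Fin n, p v * w v
        = (d:ℝ)⁻¹ * ∑ u : Fin n, (if G.Adj v u then p v * p u else 0) := by
      intro v
      have h3 : ∑ u : Fin n, (if G.Adj v u then p v * p u else 0)
          = p v * ∑ u ∈ G.neighborFinset v, p u := by
        rw [SimpleGraph.neighborFinset_eq_filter, Finset.sum_filter, Finset.mul_sum]
        exact Finset.sum_congr rfl fun u _ => by split <;> ring
      rw [h3, hw]
      ring
    have hSa : ∑ v : Fin n, ∑ u : Fin n, (if G.Adj v u then p v ^ 2 else 0)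
        = (d:ℝ) * S2 p := by
      simp_rw [hrow]
      rw [← Finset.mul_sum, S2]
    have hSb : ∑ v : Fin n, ∑ u : Fin n, (if G.Adj v u then p u ^ 2 else 0)
        = (d:ℝ) * S2 p := by
      rw [Finset.sum_comm]
      have h2 : ∀ u v : Fin n, (if G.Adj v u then p u ^ 2 else 0)
          = (if G.Adj u v then p u ^ 2 else 0) := by
        intro u v; simp [G.adj_comm]
      simp_rw [h2, hrow]
      rw [← Finset.mul_sum, S2]
    have hdf : dform G Finset.univ p
        = (d:ℝ) * S2 p + (d:ℝ) * S2 p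
          - 2 * ∑ v : Fin n, ∑ u : Fin n, (if G.Adj v u then p v * p u else 0) := by
      have expand : ∀ v u : Fin n, (if G.Adj v u then (p v - p u) ^ 2 else 0)
          = (if G.Adj v u then p v ^ 2 else 0) + (if G.Adj v u then p u ^ 2 else 0)
            - 2 * (if G.Adj v u then p v * p u else 0) := by
        intro v u; split <;> ring
      have hdd : dform G Finset.univ p
          = ∑ v : Fin n, ∑ u : Fin n, (if G.Adj v u then (p v - p u) ^ 2 else 0) := rfl
      rw [hdd]
      simp_rw [expand, Finset.sum_sub_distrib, Finset.sum_add_distrib, ← Finset.mul_sum]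
      rw [hSa, hSb]
    simp_rw [key, ← Finset.mul_sum]
    rw [eq_sub_iff_add_eq]
    have hd2 : (d:ℝ) ≠ 0 := by positivity
    field_simp
    nlinarith [hdf]
  -- combine
  have happ : ∀ v : Fin n, (lazyWalk G d).mulVec p v = 2⁻¹ * (p v + w v) := by
    intro v; rw [lazy_apply]
  have : S2 ((lazyWalk G d).mulVec p)
      = 4⁻¹ * (S2 p + 2 * (∑ v : Fin n, p v * w v) + S2 w) := by
    have hpt : ∀ x : Fin n, (2⁻¹ * (p x + w x)) ^ 2
        = 4⁻¹ * (p x ^ 2) + 2⁻¹ * (p x * w x) + 4⁻¹ * (w x ^ 2) := fun x => by ring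
    simp_rw [S2, happ, hpt]
    rw [Finset.sum_add_distrib, Finset.sum_add_distrib, ← Finset.mul_sum, ← Finset.mul_sum,
      ← Finset.mul_sum]
    ring
  rw [this, hinner]
  have h4 : ((4:ℝ) * d)⁻¹ * dform G Finset.univ p
      = 2⁻¹ * (((2:ℝ) * d)⁻¹ * dform G Finset.univ p) := by
    rw [← mul_assoc]; congr 1; rw [← mul_inv]; congr 1; ring
  nlinarith [hS2w]


lemma chi_sum (C S : Finset (Fin n)) (hSC : S ⊆ C) :
    ∑ u ∈ C, ∑ v ∈ C, (if u ∈ S ∧ v ∈ C \ S ∧ G.Adj u v then (1:ℝ) else 0)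
      = (eCount G S (C \ S) : ℝ) := by
  have h1 : ∀ u ∈ C, ∑ v ∈ C, (if u ∈ S ∧ v ∈ C \ S ∧ G.Adj u v then (1:ℝ) else 0)
      = if u ∈ S then ∑ v ∈ C \ S, (if G.Adj u v then (1:ℝ) else 0) else 0 := by
    intro u _
    by_cases huS : u ∈ S
    · rw [if_pos huS]
      have : ∀ v ∈ C, (if u ∈ S ∧ v ∈ C \ S ∧ G.Adj u v then (1:ℝ) else 0)
          = if v ∈ C \ S then (if G.Adj u v then (1:ℝ) else 0) else 0 := by
        intro v _
        by_cases hv : v ∈ C \ S <;> by_cases ha : G.Adj u v <;> simp [huS, hv, ha]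
      rw [Finset.sum_congr rfl this, Finset.sum_ite_mem,
        Finset.inter_eq_right.mpr (Finset.sdiff_subset)]
    · rw [if_neg huS]
      refine Finset.sum_eq_zero fun v _ => ?_
      simp [huS]
  rw [Finset.sum_congr rfl h1, Finset.sum_ite_mem, Finset.inter_eq_right.mpr hSC]
  rw [eCount]
  push_cast
  rfl

lemma coarea {d : ℕ} (φ : ℝ) (C : Finset (Fin n))
    (hexp : ∀ S ⊆ C, S.Nonempty → 2 * S.card ≤ C.card →
      φ * ((d : ℝ) * S.card) ≤ (eCount G S (C \ S) : ℝ)) :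
    ∀ (g : Fin n → ℝ), (∀ v, 0 ≤ g v) →
      2 * (C.filter fun v => g v ≠ 0).card ≤ C.card →
      2 * (φ * ((d:ℝ) * ∑ v ∈ C, g v ^ 2)) ≤ eform G C g := by
  suffices H : ∀ N : ℕ, ∀ g : Fin n → ℝ, (∀ v, 0 ≤ g v) →
      2 * (C.filter fun v => g v ≠ 0).card ≤ C.card →
      ((C.image g).filter fun x => 0 < x).card ≤ N →
      2 * (φ * ((d:ℝ) * ∑ v ∈ C, g v ^ 2)) ≤ eform G C g by
    intro g hg hs
    exact H _ g hg hs le_rfl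
  intro N
  induction N with
  | zero =>
    intro g hg hs hN
    have hzero : ∀ v ∈ C, g v = 0 := by
      intro v hv
      by_contra hne
      have hpos : 0 < g v := lt_of_le_of_ne (hg v) (Ne.symm hne)
      have hmem : g v ∈ (C.image g).filter fun x => 0 < x :=
        Finset.mem_filter.mpr ⟨Finset.mem_image_of_mem g hv, hpos⟩
      have := Finset.card_pos.mpr ⟨g v, hmem⟩
      omega
    have hz : ∑ v ∈ C, g v ^ 2 = 0 :=
      Finset.sum_eq_zero fun v hv => by rw [hzero v hv]; ring
    rw [hz]
    simpa using eform_nonneg G C g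
  | succ N ih =>
    intro g hg hs hN
    by_cases hle : ((C.image g).filter fun x => 0 < x).card ≤ N
    · exact ih g hg hs hle
    have hne : ((C.image g).filter fun x => 0 < x).Nonempty := by
      rw [← Finset.card_pos]; omega
    set a := ((C.image g).filter fun x => 0 < x).max' hne with ha
    have hamem : a ∈ (C.image g).filter fun x => 0 < x := Finset.max'_mem _ hne
    have hapos : 0 < a := (Finset.mem_filter.mp hamem).2
    have haimg : a ∈ C.image g := (Finset.mem_filter.mp hamem).1
    have hle_a : ∀ v ∈ C, g v ≤ a := by
      intro v hv
      rcases eq_or_lt_of_le (hg v) with h0 | hpos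
      · rw [← h0]; exact hapos.le
      · exact Finset.le_max' _ _ (Finset.mem_filter.mpr ⟨Finset.mem_image_of_mem g hv, hpos⟩)
    set S := C.filter fun v => g v = a with hSdef
    have hSC : S ⊆ C := Finset.filter_subset _ _
    have hSne : S.Nonempty := by
      rcases Finset.mem_image.mp haimg with ⟨v, hv, hva⟩
      exact ⟨v, Finset.mem_filter.mpr ⟨hv, hva⟩⟩
    have hSsupp : S ⊆ C.filter fun v => g v ≠ 0 := by
      intro v hv
      rcases Finset.mem_filter.mp hv with ⟨hvC, hva⟩
      exact Finset.mem_filter.mpr ⟨hvC, by rw [hva]; exact ne_of_gt hapos⟩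
    have hShalf : 2 * S.card ≤ C.card := by
      have := Finset.card_le_card hSsupp; omega
    have hCS : (C \ S).Nonempty := by
      rw [Finset.sdiff_nonempty]
      intro hsub
      have hCeq : C = S := Finset.Subset.antisymm hsub hSC
      have h1 : C.card = S.card := by rw [hCeq]
      have := hSne.card_pos
      omega
    set b := ((C \ S).image g).max' (hCS.image g) with hb
    have hbmem : b ∈ (C \ S).image g := Finset.max'_mem _ _
    obtain ⟨vb, hvb, hvbb⟩ := Finset.mem_image.mp hbmem
    have hb0 : 0 ≤ b := hvbb ▸ hg vb
    have hbCmem : b ∈ C.image g :=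
      hvbb ▸ Finset.mem_image_of_mem g (Finset.mem_sdiff.mp hvb).1
    have hba : b < a := by
      rcases Finset.mem_sdiff.mp hvb with ⟨hvbC, hvbS⟩
      have hne' : g vb ≠ a := fun h => hvbS (Finset.mem_filter.mpr ⟨hvbC, h⟩)
      exact lt_of_le_of_ne (hvbb ▸ hle_a vb hvbC) (hvbb ▸ hne')
    have hble : ∀ v ∈ C \ S, g v ≤ b := fun v hv =>
      Finset.le_max' _ _ (Finset.mem_image_of_mem g hv)
    set g' : Fin n → ℝ := fun v => min (g v) b with hg'def
    have hg'nonneg : ∀ v, 0 ≤ g' v := fun v => le_min (hg v) hb0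
    have hg'S : ∀ v ∈ S, g' v = b := by
      intro v hv
      have hgv : g v = a := (Finset.mem_filter.mp hv).2
      show min (g v) b = b
      rw [hgv, min_eq_right hba.le]
    have hg'CS : ∀ v ∈ C \ S, g' v = g v := by
      intro v hv
      show min (g v) b = g v
      rw [min_eq_left (hble v hv)]
    have hsum : ∑ v ∈ C, g v ^ 2 = (∑ v ∈ C, g' v ^ 2) + S.card * (a^2 - b^2) := by
      rw [← Finset.sum_sdiff hSC, ← Finset.sum_sdiff hSC (f := fun v => g' v ^ 2)]
      have e1 : ∑ v ∈ C \ S, g v ^ 2 = ∑ v ∈ C \ S, g' v ^ 2 :=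
        Finset.sum_congr rfl fun v hv => by rw [hg'CS v hv]
      have e2 : ∑ v ∈ S, g v ^ 2 = S.card * a ^ 2 := by
        rw [Finset.sum_congr rfl fun v hv => by rw [(Finset.mem_filter.mp hv).2],
          Finset.sum_const, nsmul_eq_mul]
      have e3 : ∑ v ∈ S, g' v ^ 2 = S.card * b ^ 2 := by
        rw [Finset.sum_congr rfl fun v hv => by rw [hg'S v hv],
          Finset.sum_const, nsmul_eq_mul]
      rw [e1, e2, e3]; ring
    have hs' : 2 * (C.filter fun v => g' v ≠ 0).card ≤ C.card := by
      have hsub : (C.filter fun v => g' v ≠ 0) ⊆ (C.filter fun v => g v ≠ 0) := by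
        intro v hv
        rcases Finset.mem_filter.mp hv with ⟨hvC, hvne⟩
        refine Finset.mem_filter.mpr ⟨hvC, fun h0 => hvne ?_⟩
        show min (g v) b = 0
        rw [h0, min_eq_left hb0]
      have := Finset.card_le_card hsub; omega
    have hmeas : ((C.image g').filter fun x => 0 < x).card ≤ N := by
      have hsub : ((C.image g').filter fun x => 0 < x)
          ⊆ ((C.image g).filter fun x => 0 < x).erase a := by
        intro x hx
        rcases Finset.mem_filter.mp hx with ⟨hximg, hxpos⟩
        rcases Finset.mem_image.mp hximg with ⟨v, hvC, hvx⟩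
        by_cases hvS : v ∈ S
        · have hxb : x = b := by rw [← hvx, hg'S v hvS]
          subst hxb
          exact Finset.mem_erase.mpr ⟨ne_of_lt hba, Finset.mem_filter.mpr ⟨hbCmem, hxpos⟩⟩
        · have hvCS : v ∈ C \ S := Finset.mem_sdiff.mpr ⟨hvC, hvS⟩
          have hx' : x = g v := by rw [← hvx, hg'CS v hvCS]
          subst hx'
          refine Finset.mem_erase.mpr ⟨fun h => hvS (Finset.mem_filter.mpr ⟨hvC, h⟩),
            Finset.mem_filter.mpr ⟨Finset.mem_image_of_mem g hvC, hxpos⟩⟩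
      have h1 := Finset.card_le_card hsub
      have h2 : (((C.image g).filter fun x => 0 < x).erase a).card
          = ((C.image g).filter fun x => 0 < x).card - 1 := Finset.card_erase_of_mem hamem
      omega
    have hrec := ih g' hg'nonneg hs' hmeas
    have hexpS := hexp S hSC hSne hShalf
    -- eform identity
    have key : ∀ u ∈ C, ∀ v ∈ C,
        (if G.Adj u v then |g u ^ 2 - g v ^ 2| else 0)
        = (if G.Adj u v then |g' u ^ 2 - g' v ^ 2| else 0)
          + (a ^ 2 - b ^ 2) *
            ((if u ∈ S ∧ v ∈ C \ S ∧ G.Adj u v then (1:ℝ) else 0)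
              + (if v ∈ S ∧ u ∈ C \ S ∧ G.Adj u v then (1:ℝ) else 0)) := by
      intro u hu v hv
      by_cases hadj : G.Adj u v
      swap
      · simp [hadj]
      by_cases huS : u ∈ S <;> by_cases hvS : v ∈ S
      · have e1 : g u = a := (Finset.mem_filter.mp huS).2
        have e2 : g v = a := (Finset.mem_filter.mp hvS).2
        have e3 : g' u = b := hg'S u huS
        have e4 : g' v = b := hg'S v hvS
        have n1 : ¬ (u ∈ S ∧ v ∈ C \ S ∧ G.Adj u v) :=
          fun h => (Finset.mem_sdiff.mp h.2.1).2 hvS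
        have n2 : ¬ (v ∈ S ∧ u ∈ C \ S ∧ G.Adj u v) :=
          fun h => (Finset.mem_sdiff.mp h.2.1).2 huS
        rw [if_pos hadj, if_pos hadj, if_neg n1, if_neg n2, e1, e2, e3, e4]
        simp
      · have e1 : g u = a := (Finset.mem_filter.mp huS).2
        have hvCS : v ∈ C \ S := Finset.mem_sdiff.mpr ⟨hv, hvS⟩
        have e3 : g' u = b := hg'S u huS
        have e4 : g' v = g v := hg'CS v hvCS
        have hgvb : g v ≤ b := hble v hvCS
        have h0v : 0 ≤ g v := hg v
        have n2 : ¬ (v ∈ S ∧ u ∈ C \ S ∧ G.Adj u v) := fun h => hvS h.1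
        rw [if_pos hadj, if_pos hadj, if_pos ⟨huS, hvCS, hadj⟩, if_neg n2, e1, e3, e4]
        rw [abs_of_nonneg (by nlinarith), abs_of_nonneg (by nlinarith)]
        ring
      · have e2 : g v = a := (Finset.mem_filter.mp hvS).2
        have huCS : u ∈ C \ S := Finset.mem_sdiff.mpr ⟨hu, huS⟩
        have e4 : g' v = b := hg'S v hvS
        have e3 : g' u = g u := hg'CS u huCS
        have hgub : g u ≤ b := hble u huCS
        have h0u : 0 ≤ g u := hg u
        have n1 : ¬ (u ∈ S ∧ v ∈ C \ S ∧ G.Adj u v) := fun h => huS h.1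
        rw [if_pos hadj, if_pos hadj, if_neg n1, if_pos ⟨hvS, huCS, hadj⟩, e2, e3, e4]
        rw [abs_of_nonpos (by nlinarith), abs_of_nonpos (by nlinarith)]
        ring
      · have huCS : u ∈ C \ S := Finset.mem_sdiff.mpr ⟨hu, huS⟩
        have hvCS : v ∈ C \ S := Finset.mem_sdiff.mpr ⟨hv, hvS⟩
        have e3 : g' u = g u := hg'CS u huCS
        have e4 : g' v = g v := hg'CS v hvCS
        have n1 : ¬ (u ∈ S ∧ v ∈ C \ S ∧ G.Adj u v) := fun h => huS h.1
        have n2 : ¬ (v ∈ S ∧ u ∈ C \ S ∧ G.Adj u v) := fun h => hvS h.1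
        rw [if_pos hadj, if_pos hadj, if_neg n1, if_neg n2, e3, e4]
        ring
    have heform : eform G C g = eform G C g'
        + (a ^ 2 - b ^ 2) * (2 * (eCount G S (C \ S) : ℝ)) := by
      have h0 : eform G C g = ∑ u ∈ C, ∑ v ∈ C,
          ((if G.Adj u v then |g' u ^ 2 - g' v ^ 2| else 0)
            + (a ^ 2 - b ^ 2) *
              ((if u ∈ S ∧ v ∈ C \ S ∧ G.Adj u v then (1:ℝ) else 0)
                + (if v ∈ S ∧ u ∈ C \ S ∧ G.Adj u v then (1:ℝ) else 0))) := by
        refine Finset.sum_congr rfl fun u hu => Finset.sum_congr rfl fun v hv => ?_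
        exact key u hu v hv
      rw [h0]
      simp_rw [mul_add, Finset.sum_add_distrib, ← Finset.mul_sum]
      have hx1 : ∑ u ∈ C, ∑ v ∈ C, (if u ∈ S ∧ v ∈ C \ S ∧ G.Adj u v then (1:ℝ) else 0)
          = (eCount G S (C \ S) : ℝ) := chi_sum C S hSC
      have hx2 : ∑ u ∈ C, ∑ v ∈ C, (if v ∈ S ∧ u ∈ C \ S ∧ G.Adj u v then (1:ℝ) else 0)
          = (eCount G S (C \ S) : ℝ) := by
        rw [Finset.sum_comm]
        have : ∀ v ∈ C, ∀ u ∈ C, (if v ∈ S ∧ u ∈ C \ S ∧ G.Adj u v then (1:ℝ) else 0)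
            = (if v ∈ S ∧ u ∈ C \ S ∧ G.Adj v u then (1:ℝ) else 0) := by
          intro v _ u _
          exact if_congr (and_congr_right fun _ => and_congr_right fun _ => G.adj_comm u v)
            rfl rfl
        rw [Finset.sum_congr rfl fun v hv => Finset.sum_congr rfl fun u hu => this v hv u hu]
        exact chi_sum C S hSC
      rw [hx1, hx2, eform]
      ring
    have hab2 : (0:ℝ) ≤ a ^ 2 - b ^ 2 := by nlinarith
    rw [heform, hsum]
    have expand : 2 * (φ * ((d:ℝ) * ((∑ v ∈ C, g' v ^ 2) + S.card * (a ^ 2 - b ^ 2))))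
        = 2 * (φ * ((d:ℝ) * ∑ v ∈ C, g' v ^ 2))
          + (a ^ 2 - b ^ 2) * (2 * (φ * ((d:ℝ) * S.card))) := by ring
    rw [expand]
    have h1 : (a ^ 2 - b ^ 2) * (2 * (φ * ((d:ℝ) * S.card)))
        ≤ (a ^ 2 - b ^ 2) * (2 * (eCount G S (C \ S) : ℝ)) := by
      apply mul_le_mul_of_nonneg_left _ hab2
      linarith [hexpS]
    linarith [hrec, h1]


lemma dirichlet {d : ℕ} (hreg : G.IsRegularOfDegree d) (hd : 0 < d) (φ : ℝ) (hφ : 0 ≤ φ)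
    (C : Finset (Fin n))
    (hexp : ∀ S ⊆ C, S.Nonempty → 2 * S.card ≤ C.card →
      φ * ((d : ℝ) * S.card) ≤ (eCount G S (C \ S) : ℝ))
    (g : Fin n → ℝ) (hg : ∀ v, 0 ≤ g v)
    (hsupp : 2 * (C.filter fun v => g v ≠ 0).card ≤ C.card) :
    φ ^ 2 * d * ∑ v ∈ C, g v ^ 2 ≤ dform G C g := by
  set T := ∑ v ∈ C, g v ^ 2 with hT
  have hT0 : 0 ≤ T := Finset.sum_nonneg fun v _ => sq_nonneg _
  rcases eq_or_lt_of_le hT0 with hTz | hTpos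
  · rw [← hTz, mul_zero]
    exact dform_nonneg G C g
  have hco := coarea φ C hexp g hg hsupp
  -- Cauchy-Schwarz over the product
  set F : Fin n × Fin n → ℝ := fun p => if G.Adj p.1 p.2 then |g p.1 - g p.2| else 0 with hF
  set H : Fin n × Fin n → ℝ := fun p => if G.Adj p.1 p.2 then g p.1 + g p.2 else 0 with hH
  have heq : eform G C g = ∑ p ∈ C ×ˢ C, F p * H p := by
    rw [Finset.sum_product]
    refine Finset.sum_congr rfl fun u _ => Finset.sum_congr rfl fun v _ => ?_
    by_cases hadj : G.Adj u v
    · simp only [hF, hH, if_pos hadj]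
      have e : g u ^ 2 - g v ^ 2 = (g u - g v) * (g u + g v) := by ring
      rw [e, abs_mul, abs_of_nonneg (add_nonneg (hg u) (hg v))]
    · simp [hF, hH, hadj]
  have hFsq : ∑ p ∈ C ×ˢ C, F p ^ 2 = dform G C g := by
    rw [dform, Finset.sum_product]
    refine Finset.sum_congr rfl fun u _ => Finset.sum_congr rfl fun v _ => ?_
    by_cases hadj : G.Adj u v <;> simp [hF, hadj, sq_abs]
  have hdeg : ∀ u : Fin n, ((C.filter (G.Adj u)).card : ℝ) ≤ d := by
    intro u
    have hsub : C.filter (G.Adj u) ⊆ G.neighborFinset u := by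
      intro v hv
      exact (SimpleGraph.mem_neighborFinset G u v).mpr (Finset.mem_filter.mp hv).2
    have := Finset.card_le_card hsub
    have hcard : (G.neighborFinset u).card = d := hreg u
    exact_mod_cast hcard ▸ this
  have hrow2 : ∀ u ∈ C, ∑ v ∈ C, (if G.Adj u v then g u ^ 2 else 0) ≤ (d:ℝ) * g u ^ 2 := by
    intro u _
    rw [Finset.sum_ite, Finset.sum_const, Finset.sum_const_zero, add_zero, nsmul_eq_mul]
    exact mul_le_mul_of_nonneg_right (hdeg u) (sq_nonneg _)
  have hHsq : ∑ p ∈ C ×ˢ C, H p ^ 2 ≤ 4 * d * T := by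
    rw [Finset.sum_product]
    have hterm : ∀ u ∈ C, ∀ v ∈ C, H (u, v) ^ 2
        ≤ 2 * (if G.Adj u v then g u ^ 2 else 0) + 2 * (if G.Adj u v then g v ^ 2 else 0) := by
      intro u _ v _
      by_cases hadj : G.Adj u v
      · simp only [hH, if_pos hadj]; nlinarith [sq_nonneg (g u - g v)]
      · simp [hH, hadj]
    calc ∑ u ∈ C, ∑ v ∈ C, H (u, v) ^ 2
        ≤ ∑ u ∈ C, ∑ v ∈ C, (2 * (if G.Adj u v then g u ^ 2 else 0)
            + 2 * (if G.Adj u v then g v ^ 2 else 0)) := by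
          refine Finset.sum_le_sum fun u hu => Finset.sum_le_sum fun v hv => hterm u hu v hv
      _ = 2 * (∑ u ∈ C, ∑ v ∈ C, (if G.Adj u v then g u ^ 2 else 0))
            + 2 * (∑ u ∈ C, ∑ v ∈ C, (if G.Adj u v then g v ^ 2 else 0)) := by
          simp_rw [Finset.sum_add_distrib, ← Finset.mul_sum]
      _ ≤ 2 * ((d:ℝ) * T) + 2 * ((d:ℝ) * T) := by
          have h1 : ∑ u ∈ C, ∑ v ∈ C, (if G.Adj u v then g u ^ 2 else 0) ≤ (d:ℝ) * T := by
            calc ∑ u ∈ C, ∑ v ∈ C, (if G.Adj u v then g u ^ 2 else 0)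
                ≤ ∑ u ∈ C, (d:ℝ) * g u ^ 2 := Finset.sum_le_sum hrow2
              _ = (d:ℝ) * T := by rw [← Finset.mul_sum]
          have h2 : ∑ u ∈ C, ∑ v ∈ C, (if G.Adj u v then g v ^ 2 else 0) ≤ (d:ℝ) * T := by
            rw [Finset.sum_comm]
            have hsw : ∀ v ∈ C, ∀ u ∈ C, (if G.Adj u v then g v ^ 2 else 0)
                = (if G.Adj v u then g v ^ 2 else 0) := by
              intro v _ u _
              exact if_congr (G.adj_comm u v) rfl rfl
            calc ∑ v ∈ C, ∑ u ∈ C, (if G.Adj u v then g v ^ 2 else 0)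
                = ∑ v ∈ C, ∑ u ∈ C, (if G.Adj v u then g v ^ 2 else 0) :=
                  Finset.sum_congr rfl fun v hv => Finset.sum_congr rfl fun u hu => hsw v hv u hu
              _ ≤ ∑ v ∈ C, (d:ℝ) * g v ^ 2 := Finset.sum_le_sum hrow2
              _ = (d:ℝ) * T := by rw [← Finset.mul_sum]
          linarith
      _ = 4 * d * T := by ring
  have hcs := sum_mul_sq_le_sq_mul_sq (C ×ˢ C) F H
  have hE0 : 0 ≤ eform G C g := eform_nonneg G C g
  have hsq : (2 * (φ * ((d:ℝ) * T))) ^ 2 ≤ (∑ p ∈ C ×ˢ C, F p * H p) ^ 2 := by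
    rw [← heq]
    have h0 : 0 ≤ 2 * (φ * ((d:ℝ) * T)) := by positivity
    nlinarith [hco]
  rw [hFsq] at hcs
  have hd' : (0:ℝ) < d := by exact_mod_cast hd
  have hfin : (2 * (φ * ((d:ℝ) * T))) ^ 2 ≤ dform G C g * (4 * d * T) := by
    calc (2 * (φ * ((d:ℝ) * T))) ^ 2 ≤ (∑ p ∈ C ×ˢ C, F p * H p) ^ 2 := hsq
      _ ≤ dform G C g * ∑ p ∈ C ×ˢ C, H p ^ 2 := hcs
      _ ≤ dform G C g * (4 * d * T) := by
          exact mul_le_mul_of_nonneg_left hHsq (dform_nonneg G C g)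
  nlinarith [mul_pos hd' hTpos, dform_nonneg G C g]

lemma median_exists (C : Finset (Fin n)) (f : Fin n → ℝ) :
    ∃ c : ℝ, 2 * (C.filter fun v => c < f v).card ≤ C.card
      ∧ 2 * (C.filter fun v => f v < c).card ≤ C.card := by
  rcases C.eq_empty_or_nonempty with hC | hC
  · exact ⟨0, by simp [hC]⟩
  have hvne : (C.image f).Nonempty := hC.image f
  set B := (C.image f).filter
    (fun c => 2 * (C.filter fun v => f v < c).card ≤ C.card) with hB
  have hBne : B.Nonempty := by
    refine ⟨(C.image f).min' hvne, Finset.mem_filter.mpr ⟨Finset.min'_mem _ _, ?_⟩⟩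
    have hemp : (C.filter fun v => f v < (C.image f).min' hvne) = ∅ := by
      rw [Finset.filter_eq_empty_iff]
      intro v hv
      exact not_lt.mpr (Finset.min'_le _ _ (Finset.mem_image_of_mem f hv))
    rw [hemp]
    simp
  refine ⟨B.max' hBne, ?_, (Finset.mem_filter.mp (Finset.max'_mem _ hBne)).2⟩
  by_contra hcon
  push_neg at hcon
  set c := B.max' hBne with hc
  set T := C.filter fun v => c < f v with hT
  have hTne : T.Nonempty := by
    rw [← Finset.card_pos]; omega
  have hTimg : (T.image f).Nonempty := hTne.image f
  set c' := (T.image f).min' hTimg with hc'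
  obtain ⟨w, hw, hwc'⟩ := Finset.mem_image.mp (Finset.min'_mem (T.image f) hTimg)
  have hc'vals : c' ∈ C.image f := by
    rw [hc', ← hwc']
    exact Finset.mem_image_of_mem f (Finset.mem_filter.mp hw).1
  have hcc' : c < c' := by
    rw [hc', ← hwc']
    exact (Finset.mem_filter.mp hw).2
  have hsub : (C.filter fun v => f v < c') ⊆ C \ T := by
    intro v hv
    rcases Finset.mem_filter.mp hv with ⟨hvC, hvlt⟩
    refine Finset.mem_sdiff.mpr ⟨hvC, fun hvT => ?_⟩
    exact absurd (Finset.min'_le _ _ (Finset.mem_image_of_mem f hvT)) (not_le.mpr hvlt)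
  have hc'B : c' ∈ B := by
    refine Finset.mem_filter.mpr ⟨hc'vals, ?_⟩
    have h1 := Finset.card_le_card hsub
    have h2 : (C \ T).card = C.card - T.card := Finset.card_sdiff_of_subset (Finset.filter_subset _ _)
    have h3 : T.card ≤ C.card := Finset.card_le_card (Finset.filter_subset _ _)
    omega
  exact absurd (Finset.le_max' _ _ hc'B) (not_le.mpr hcc')

lemma cluster_poincare {d : ℕ} (hreg : G.IsRegularOfDegree d) (hd : 0 < d) (φ : ℝ)
    (hφ : 0 ≤ φ) (C : Finset (Fin n))
    (hexp : ∀ S ⊆ C, S.Nonempty → 2 * S.card ≤ C.card →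
      φ * ((d : ℝ) * S.card) ≤ (eCount G S (C \ S) : ℝ))
    (f : Fin n → ℝ) :
    φ ^ 2 * d * ((∑ v ∈ C, f v ^ 2) - (∑ v ∈ C, f v) ^ 2 / C.card) ≤ dform G C f := by
  rcases C.eq_empty_or_nonempty with hC | hCne
  · subst hC
    simp [dform]
  obtain ⟨c, hc1, hc2⟩ := median_exists C f
  set g : Fin n → ℝ := fun v => max (f v - c) 0 with hgdef
  set h : Fin n → ℝ := fun v => max (c - f v) 0 with hhdef
  have hg0 : ∀ v, 0 ≤ g v := fun v => le_max_right _ _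
  have hh0 : ∀ v, 0 ≤ h v := fun v => le_max_right _ _
  have hgh : ∀ v, g v - h v = f v - c := by
    intro v
    rcases le_total (f v) c with hle | hle
    · show max (f v - c) 0 - max (c - f v) 0 = f v - c
      rw [max_eq_right (by linarith), max_eq_left (by linarith)]
      ring
    · show max (f v - c) 0 - max (c - f v) 0 = f v - c
      rw [max_eq_left (by linarith), max_eq_right (by linarith)]
      ring
  have hghz : ∀ v, g v * h v = 0 := by
    intro v
    rcases le_total (f v) c with hle | hle
    · have : g v = 0 := max_eq_right (by linarith)
      rw [this, zero_mul]
    · have : h v = 0 := max_eq_right (by linarith)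
      rw [this, mul_zero]
  have hgsupp : 2 * (C.filter fun v => g v ≠ 0).card ≤ C.card := by
    have heqf : (C.filter fun v => g v ≠ 0) = (C.filter fun v => c < f v) := by
      apply Finset.filter_congr
      intro v _
      constructor
      · intro hne
        by_contra hle
        push_neg at hle
        exact hne (max_eq_right (by linarith))
      · intro hlt
        show max (f v - c) 0 ≠ 0
        rw [max_eq_left (by linarith)]
        exact ne_of_gt (by linarith)
    rw [heqf]
    exact hc1
  have hhsupp : 2 * (C.filter fun v => h v ≠ 0).card ≤ C.card := by
    have heqf : (C.filter fun v => h v ≠ 0) = (C.filter fun v => f v < c) := by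
      apply Finset.filter_congr
      intro v _
      constructor
      · intro hne
        by_contra hle
        push_neg at hle
        exact hne (max_eq_right (by linarith))
      · intro hlt
        show max (c - f v) 0 ≠ 0
        rw [max_eq_left (by linarith)]
        exact ne_of_gt (by linarith)
    rw [heqf]
    exact hc2
  have hDg := dirichlet hreg hd φ hφ C hexp g hg0 hgsupp
  have hDh := dirichlet hreg hd φ hφ C hexp h hh0 hhsupp
  have hdsum : dform G C g + dform G C h ≤ dform G C f := by
    rw [dform, dform, dform, ← Finset.sum_add_distrib]
    refine Finset.sum_le_sum fun u _ => ?_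
    rw [← Finset.sum_add_distrib]
    refine Finset.sum_le_sum fun v _ => ?_
    by_cases hadj : G.Adj u v
    · rw [if_pos hadj, if_pos hadj, if_pos hadj]
      have e : f u - f v = (g u - g v) - (h u - h v) := by
        have e1 := hgh u
        have e2 := hgh v
        linarith
      rw [e]
      nlinarith [mul_nonneg (hg0 u) (hh0 v), mul_nonneg (hg0 v) (hh0 u), hghz u, hghz v]
    · simp [hadj]
  have hsplit : (∑ v ∈ C, g v ^ 2) + (∑ v ∈ C, h v ^ 2) = ∑ v ∈ C, (f v - c) ^ 2 := by
    rw [← Finset.sum_add_distrib]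
    refine Finset.sum_congr rfl fun v _ => ?_
    linear_combination 2 * hghz v + (g v - h v + (f v - c)) * hgh v
  have hvar : (∑ v ∈ C, f v ^ 2) - (∑ v ∈ C, f v) ^ 2 / C.card ≤ ∑ v ∈ C, (f v - c) ^ 2 := by
    have hm : (0:ℝ) < C.card := by exact_mod_cast hCne.card_pos
    have hexpand : ∑ v ∈ C, (f v - c) ^ 2
        = (∑ v ∈ C, f v ^ 2) - 2 * c * (∑ v ∈ C, f v) + C.card * c ^ 2 := by
      have : ∀ v ∈ C, (f v - c) ^ 2 = f v ^ 2 - 2 * c * f v + c ^ 2 := fun v _ => by ring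
      rw [Finset.sum_congr rfl this, Finset.sum_add_distrib, Finset.sum_sub_distrib,
        Finset.sum_const, nsmul_eq_mul, ← Finset.mul_sum]
      try ring
    rw [hexpand]
    have hkey : 0 ≤ (C.card : ℝ) * c ^ 2 - 2 * c * (∑ v ∈ C, f v) + (∑ v ∈ C, f v) ^ 2 / C.card := by
      have hsq := sq_nonneg ((C.card : ℝ) * c - ∑ v ∈ C, f v)
      have h1 : ((C.card : ℝ) * c - ∑ v ∈ C, f v) ^ 2 / C.card
          = (C.card : ℝ) * c ^ 2 - 2 * c * (∑ v ∈ C, f v) + (∑ v ∈ C, f v) ^ 2 / C.card := by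
        field_simp
        ring
      calc (0:ℝ) ≤ ((C.card : ℝ) * c - ∑ v ∈ C, f v) ^ 2 / C.card := by positivity
        _ = _ := h1
    linarith
  calc φ ^ 2 * d * ((∑ v ∈ C, f v ^ 2) - (∑ v ∈ C, f v) ^ 2 / C.card)
      ≤ φ ^ 2 * d * ∑ v ∈ C, (f v - c) ^ 2 := by
        apply mul_le_mul_of_nonneg_left hvar (by positivity)
    _ = φ ^ 2 * d * (∑ v ∈ C, g v ^ 2) + φ ^ 2 * d * (∑ v ∈ C, h v ^ 2) := by
        rw [← hsplit]; ring
    _ ≤ dform G C g + dform G C h := add_le_add hDg hDh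
    _ ≤ dform G C f := hdsum


variable {k : ℕ}

lemma partition_sum (C : Fin k → Finset (Fin n)) (hpart : ∀ v, ∃! i, v ∈ C i)
    (F : Fin n → ℝ) :
    ∑ i : Fin k, ∑ v ∈ C i, F v = ∑ v : Fin n, F v := by
  classical
  have hCfib : ∀ i : Fin k, C i = Finset.univ.filter (fun v => (hpart v).choose = i) := by
    intro i
    ext v
    simp only [Finset.mem_filter, Finset.mem_univ, true_and]
    constructor
    · intro hv
      exact ((hpart v).choose_spec.2 i hv).symm ▸ rfl
    · intro hv
      exact hv ▸ (hpart v).choose_spec.1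
  calc ∑ i : Fin k, ∑ v ∈ C i, F v
      = ∑ i : Fin k, ∑ v ∈ Finset.univ.filter (fun v => (hpart v).choose = i), F v := by
        refine Finset.sum_congr rfl fun i _ => ?_
        rw [← hCfib i]
    _ = ∑ v : Fin n, F v := Finset.sum_fiberwise _ _ _

lemma dform_ge_clusters (C : Fin k → Finset (Fin n)) (hpart : ∀ v, ∃! i, v ∈ C i)
    (p : Fin n → ℝ) :
    ∑ i : Fin k, dform G (C i) p ≤ dform G Finset.univ p := by
  have hsub : ∀ i : Fin k, dform G (C i) p
      ≤ ∑ u ∈ C i, ∑ v : Fin n, (if G.Adj u v then (p u - p v) ^ 2 else 0) := by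
    intro i
    refine Finset.sum_le_sum fun u _ => ?_
    refine Finset.sum_le_sum_of_subset_of_nonneg (Finset.subset_univ _) fun v _ _ => ?_
    split <;> positivity
  calc ∑ i : Fin k, dform G (C i) p
      ≤ ∑ i : Fin k, ∑ u ∈ C i, ∑ v : Fin n, (if G.Adj u v then (p u - p v) ^ 2 else 0) :=
        Finset.sum_le_sum fun i _ => hsub i
    _ = ∑ u : Fin n, ∑ v : Fin n, (if G.Adj u v then (p u - p v) ^ 2 else 0) :=
        partition_sum C hpart _
    _ = dform G Finset.univ p := rfl

lemma flat_bound (C : Fin k → Finset (Fin n)) (hk : 0 < k)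
    (hne : ∀ i, (C i).Nonempty) (p : Fin n → ℝ) (hp : ∀ v, 0 ≤ p v)
    (hsum1 : ∑ v : Fin n, p v = 1)
    (mcard : ℝ)
    (hmc : mcard = Finset.univ.inf' (Finset.univ_nonempty_iff.mpr ⟨⟨0, hk⟩⟩)
      (fun i : Fin k => ((C i).card : ℝ)))
    (hpart : ∀ v, ∃! i, v ∈ C i) :
    ∑ i : Fin k, (∑ v ∈ C i, p v) ^ 2 / ((C i).card : ℝ) ≤ 1 / mcard := by
  have hmpos : 0 < mcard := by
    rw [hmc, Finset.lt_inf'_iff]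
    intro i _
    exact_mod_cast (hne i).card_pos
  have hmle : ∀ i : Fin k, mcard ≤ ((C i).card : ℝ) := by
    intro i
    rw [hmc]
    exact Finset.inf'_le _ (Finset.mem_univ i)
  have hmi : ∀ i : Fin k, 0 ≤ ∑ v ∈ C i, p v :=
    fun i => Finset.sum_nonneg fun v _ => hp v
  calc ∑ i : Fin k, (∑ v ∈ C i, p v) ^ 2 / ((C i).card : ℝ)
      ≤ ∑ i : Fin k, (∑ v ∈ C i, p v) ^ 2 / mcard := by
        refine Finset.sum_le_sum fun i _ => ?_
        gcongr
        exact hmle i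
    _ = (∑ i : Fin k, (∑ v ∈ C i, p v) ^ 2) / mcard := by rw [Finset.sum_div]
    _ ≤ (∑ i : Fin k, ∑ v ∈ C i, p v) ^ 2 / mcard := by
        gcongr
        exact Finset.sum_sq_le_sq_sum_of_nonneg fun i _ => hmi i
    _ = 1 / mcard := by rw [partition_sum C hpart p, hsum1]; norm_num


lemma step_rec {d : ℕ} (hreg : G.IsRegularOfDegree d) (hd : 0 < d) (φ : ℝ) (hφ : 0 ≤ φ)
    (C : Fin k → Finset (Fin n)) (hk : 0 < k)
    (hpart : ∀ v, ∃! i, v ∈ C i) (hne : ∀ i, (C i).Nonempty)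
    (hin : ∀ i, ∀ S ⊆ C i, S.Nonempty → 2 * S.card ≤ (C i).card →
      φ * ((d : ℝ) * S.card) ≤ (eCount G S (C i \ S) : ℝ))
    (mcard : ℝ)
    (hmc : mcard = Finset.univ.inf' (Finset.univ_nonempty_iff.mpr ⟨⟨0, hk⟩⟩)
      (fun i : Fin k => ((C i).card : ℝ)))
    (p : Fin n → ℝ) (hp : ∀ v, 0 ≤ p v) (hsum1 : ∑ v : Fin n, p v = 1) :
    S2 ((lazyWalk G d).mulVec p)
      ≤ (1 - φ ^ 2 / 4) * S2 p + (φ ^ 2 / 4) * (1 / mcard) := by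
  have hstep := lazy_step hreg hd p
  have hcl : ∀ i : Fin k,
      φ ^ 2 * d * ((∑ v ∈ C i, p v ^ 2) - (∑ v ∈ C i, p v) ^ 2 / ((C i).card : ℝ))
        ≤ dform G (C i) p := fun i => cluster_poincare hreg hd φ hφ (C i) (hin i) p
  have hsumcl : φ ^ 2 * d * (S2 p - ∑ i : Fin k, (∑ v ∈ C i, p v) ^ 2 / ((C i).card : ℝ))
      ≤ dform G Finset.univ p := by
    have h1 : ∑ i : Fin k,
        φ ^ 2 * d * ((∑ v ∈ C i, p v ^ 2) - (∑ v ∈ C i, p v) ^ 2 / ((C i).card : ℝ))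
        ≤ ∑ i : Fin k, dform G (C i) p := Finset.sum_le_sum fun i _ => hcl i
    have h2 := dform_ge_clusters (G := G) C hpart p
    have h3 : ∑ i : Fin k,
        φ ^ 2 * d * ((∑ v ∈ C i, p v ^ 2) - (∑ v ∈ C i, p v) ^ 2 / ((C i).card : ℝ))
        = φ ^ 2 * d * (S2 p - ∑ i : Fin k, (∑ v ∈ C i, p v) ^ 2 / ((C i).card : ℝ)) := by
      rw [← Finset.mul_sum, Finset.sum_sub_distrib]
      have h4 : ∑ i : Fin k, ∑ v ∈ C i, p v ^ 2 = S2 p :=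
        partition_sum C hpart (fun v => p v ^ 2)
      rw [h4]
    linarith
  have hflat := flat_bound C hk hne p hp hsum1 mcard hmc hpart
  have hmpos : 0 < mcard := by
    rw [hmc, Finset.lt_inf'_iff]
    intro i _
    exact_mod_cast (hne i).card_pos
  have hd' : (0:ℝ) < d := by exact_mod_cast hd
  have hkey : ((4:ℝ) * d)⁻¹ * (φ ^ 2 * d * (S2 p - ∑ i : Fin k, (∑ v ∈ C i, p v) ^ 2 / ((C i).card : ℝ)))
      = (φ ^ 2 / 4) * (S2 p - ∑ i : Fin k, (∑ v ∈ C i, p v) ^ 2 / ((C i).card : ℝ)) := by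
    field_simp
  have hmono : ((4:ℝ) * d)⁻¹ * (φ ^ 2 * d * (S2 p - ∑ i : Fin k, (∑ v ∈ C i, p v) ^ 2 / ((C i).card : ℝ)))
      ≤ ((4:ℝ) * d)⁻¹ * dform G Finset.univ p := by
    apply mul_le_mul_of_nonneg_left hsumcl (by positivity)
  rw [hkey] at hmono
  have hphi4 : 0 ≤ φ ^ 2 / 4 := by positivity
  nlinarith [mul_le_mul_of_nonneg_left hflat hphi4]

lemma iterate_bound {d : ℕ} (hreg : G.IsRegularOfDegree d) (hd : 0 < d) (φ : ℝ) (hφ : 0 ≤ φ)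
    (hφ1 : φ < 1)
    (C : Fin k → Finset (Fin n)) (hk : 0 < k)
    (hpart : ∀ v, ∃! i, v ∈ C i) (hne : ∀ i, (C i).Nonempty)
    (hin : ∀ i, ∀ S ⊆ C i, S.Nonempty → 2 * S.card ≤ (C i).card →
      φ * ((d : ℝ) * S.card) ≤ (eCount G S (C i \ S) : ℝ))
    (mcard : ℝ)
    (hmc : mcard = Finset.univ.inf' (Finset.univ_nonempty_iff.mpr ⟨⟨0, hk⟩⟩)
      (fun i : Fin k => ((C i).card : ℝ)))
    (x : Fin n) (t : ℕ) :
    S2 ((lazyWalk G d ^ t).mulVec (fun z => if z = x then (1:ℝ) else 0))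
      ≤ (1 - φ ^ 2 / 4) ^ t + 1 / mcard := by
  have hmpos : 0 < mcard := by
    rw [hmc, Finset.lt_inf'_iff]
    intro i _
    exact_mod_cast (hne i).card_pos
  have hβ0 : (0:ℝ) ≤ 1 - φ ^ 2 / 4 := by nlinarith
  set p0 : Fin n → ℝ := fun z => if z = x then (1:ℝ) else 0 with hp0
  have hstrong : ∀ t : ℕ,
      (∀ v, 0 ≤ (lazyWalk G d ^ t).mulVec p0 v)
      ∧ (∑ v : Fin n, (lazyWalk G d ^ t).mulVec p0 v = 1)
      ∧ S2 ((lazyWalk G d ^ t).mulVec p0) ≤ (1 - φ ^ 2 / 4) ^ t + 1 / mcard := by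
    intro t
    induction t with
    | zero =>
      have h0 : (lazyWalk G d ^ 0).mulVec p0 = p0 := by
        rw [pow_zero, Matrix.one_mulVec]
      rw [h0]
      refine ⟨fun v => by rw [hp0]; dsimp only; split <;> norm_num, ?_, ?_⟩
      · rw [hp0]
        simp
      · have : S2 p0 = 1 := by
          rw [S2, hp0]
          have : ∀ z : Fin n, ((if z = x then (1:ℝ) else 0) ^ 2) = if z = x then (1:ℝ) else 0 := by
            intro z; split <;> norm_num
          simp_rw [this]
          simp
        rw [this, pow_zero]
        have : 0 < 1 / mcard := by positivity
        linarith
    | succ t ih =>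
      obtain ⟨ihpos, ihsum, ihS2⟩ := ih
      have hsucc : (lazyWalk G d ^ (t + 1)).mulVec p0
          = (lazyWalk G d).mulVec ((lazyWalk G d ^ t).mulVec p0) := by
        rw [pow_succ', Matrix.mulVec_mulVec]
      rw [hsucc]
      refine ⟨fun v => lazy_nonneg d _ ihpos v, ?_, ?_⟩
      · rw [lazy_sum hreg hd _]
        exact ihsum
      · have hrec := step_rec hreg hd φ hφ C hk hpart hne hin mcard hmc
          ((lazyWalk G d ^ t).mulVec p0) ihpos ihsum
        have hβ1 : (1 - φ ^ 2 / 4) ≤ 1 := by nlinarith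
        calc S2 ((lazyWalk G d).mulVec ((lazyWalk G d ^ t).mulVec p0))
            ≤ (1 - φ ^ 2 / 4) * S2 ((lazyWalk G d ^ t).mulVec p0)
              + (φ ^ 2 / 4) * (1 / mcard) := hrec
          _ ≤ (1 - φ ^ 2 / 4) * ((1 - φ ^ 2 / 4) ^ t + 1 / mcard)
              + (φ ^ 2 / 4) * (1 / mcard) := by
              apply add_le_add_left
              exact mul_le_mul_of_nonneg_left ihS2 hβ0
          _ = (1 - φ ^ 2 / 4) ^ (t + 1) + 1 / mcard := by ring
  exact (hstrong t).2.2

end Stmt16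

set_option maxHeartbeats 1000000 in
open Stmt16 in
/-- There is a constant `c > 0` such that: for every `d`-regular
graph `G` on `n` vertices admitting a `(k,φ,ε)`-clustering with cluster-size ratio
`η = minᵢ|Cᵢ|/maxᵢ|Cᵢ|`, and every `t ≥ 20·log n/φ²`, the endpoint distribution of
the `t`-step lazy random walk from any vertex `x` satisfies
`‖Mᵗ𝟙ₓ‖₂ ≤ c·(k/√η)·n^{−1/2 + 20ε/φ²}`. -/
theorem stmt16 : ∃ c : ℝ, 0 < c ∧
    ∀ (n k d t : ℕ), 0 < k → 0 < d →
    ∀ (φ ε : ℝ), 0 < φ → φ < 1 → 0 ≤ ε →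
    ∀ (G : SimpleGraph (Fin n)) (_ : DecidableRel G.Adj),
    G.IsRegularOfDegree d →
    ∀ (C : Fin k → Finset (Fin n)) (hk : 0 < k),
    (∀ v : Fin n, ∃! i, v ∈ C i) →
    (∀ i, (C i).Nonempty) →
    (∀ i, ∀ S ⊆ C i, S.Nonempty → 2 * S.card ≤ (C i).card →
      φ * ((d : ℝ) * S.card) ≤ (eCount G S (C i \ S) : ℝ)) →
    (∀ i, (eCount G (C i) (C i)ᶜ : ℝ) ≤ ε * ((d : ℝ) * (C i).card)) →
    ∀ η : ℝ,
    η = (Finset.univ.inf' (Finset.univ_nonempty_iff.mpr ⟨⟨0, hk⟩⟩)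
          fun i : Fin k => ((C i).card : ℝ)) /
        (Finset.univ.sup' (Finset.univ_nonempty_iff.mpr ⟨⟨0, hk⟩⟩)
          fun i : Fin k => ((C i).card : ℝ)) →
    20 * Real.log n / φ ^ 2 ≤ (t : ℝ) →
    ∀ x : Fin n,
      Real.sqrt (∑ y : Fin n,
          ((lazyWalk G d ^ t).mulVec (fun z => if z = x then (1 : ℝ) else 0) y) ^ 2) ≤
        c * ((k : ℝ) / Real.sqrt η) * (n : ℝ) ^ (-(1 / 2 : ℝ) + 20 * ε / φ ^ 2) := by
  refine ⟨2, by norm_num, ?_⟩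
  intro n k d t hk0 hd φ ε hφ hφ1 hε G inst hreg C hk hpart hne hin hout η hη ht x
  rcases Nat.eq_zero_or_pos n with hn0 | hn0
  · subst hn0
    exact x.elim0
  have hn1 : (1:ℝ) ≤ (n:ℝ) := by exact_mod_cast hn0
  have hnR : (0:ℝ) < (n:ℝ) := by linarith
  set mcard : ℝ := Finset.univ.inf' (Finset.univ_nonempty_iff.mpr ⟨⟨0, hk⟩⟩)
    (fun i : Fin k => ((C i).card : ℝ)) with hmc
  set Mcard : ℝ := Finset.univ.sup' (Finset.univ_nonempty_iff.mpr ⟨⟨0, hk⟩⟩)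
    (fun i : Fin k => ((C i).card : ℝ)) with hMc
  have hmpos : 0 < mcard := by
    rw [hmc, Finset.lt_inf'_iff]
    intro i _
    exact_mod_cast (hne i).card_pos
  have hmM : mcard ≤ Mcard := by
    calc mcard ≤ ((C ⟨0, hk⟩).card : ℝ) := Finset.inf'_le _ (Finset.mem_univ _)
      _ ≤ Mcard :=
        Finset.le_sup' (fun i : Fin k => ((C i).card : ℝ)) (Finset.mem_univ ⟨0, hk⟩)
  have hMpos : 0 < Mcard := lt_of_lt_of_le hmpos hmM
  have hηpos : 0 < η := by rw [hη]; positivity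
  have hη1 : η ≤ 1 := by
    rw [hη]
    exact div_le_one_of_le₀ hmM hMpos.le
  have hk1 : (1:ℝ) ≤ (k:ℝ) := by exact_mod_cast hk
  -- sum of cluster sizes is n
  have hcardsum : ∑ i : Fin k, ((C i).card : ℝ) = n := by
    have h1 : ∀ i : Fin k, ((C i).card : ℝ) = ∑ v ∈ C i, (1:ℝ) := by
      intro i; rw [Finset.sum_const, nsmul_eq_mul, mul_one]
    simp_rw [h1]
    rw [partition_sum C hpart (fun _ => (1:ℝ))]
    rw [Finset.sum_const, nsmul_eq_mul, mul_one]
    simp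
  have hnM : (n:ℝ) ≤ k * Mcard := by
    rw [← hcardsum]
    calc ∑ i : Fin k, ((C i).card : ℝ) ≤ ∑ _i : Fin k, Mcard :=
          Finset.sum_le_sum fun i _ =>
            Finset.le_sup' (fun j : Fin k => ((C j).card : ℝ)) (Finset.mem_univ i)
      _ = k * Mcard := by rw [Finset.sum_const, nsmul_eq_mul]; simp
  have hηn : η * n ≤ k * mcard := by
    rw [hη]
    calc mcard / Mcard * n ≤ mcard / Mcard * (k * Mcard) := by
          apply mul_le_mul_of_nonneg_left hnM (by positivity)
      _ = k * mcard := by field_simp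
  have h1m : 1 / mcard ≤ (k:ℝ) ^ 2 / (η * n) := by
    rw [div_le_div_iff₀ hmpos (by positivity)]
    calc 1 * (η * n) = η * n := by ring
      _ ≤ k * mcard := hηn
      _ ≤ (k:ℝ)^2 * mcard := by nlinarith [hk1, hmpos, sq_nonneg ((k:ℝ) - 1)]
  -- the walk bound
  have hX := iterate_bound hreg hd φ hφ.le hφ1 C hk hpart hne hin mcard hmc x t
  -- (1 - φ²/4)^t ≤ 1/n
  have hφ2 : 0 < φ ^ 2 := by positivity
  have hβ0 : (0:ℝ) ≤ 1 - φ ^ 2 / 4 := by nlinarith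
  have hlogn : 0 ≤ Real.log n := Real.log_nonneg hn1
  have hβt : (1 - φ ^ 2 / 4) ^ t ≤ 1 / (n:ℝ) := by
    have hβexp : (1 - φ ^ 2 / 4) ≤ Real.exp (-(φ ^ 2 / 4)) := by
      have := Real.add_one_le_exp (-(φ ^ 2 / 4))
      linarith
    have h1 : (1 - φ ^ 2 / 4) ^ t ≤ Real.exp (-(φ ^ 2 / 4)) ^ t :=
      pow_le_pow_left₀ hβ0 hβexp t
    have h2 : Real.exp (-(φ ^ 2 / 4)) ^ t = Real.exp (-((t:ℝ) * (φ ^ 2 / 4))) := by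
      rw [← Real.exp_nat_mul]
      ring_nf
    have h3 : 20 * Real.log n ≤ (t:ℝ) * φ ^ 2 := by
      rw [div_le_iff₀ hφ2] at ht
      linarith
    have h4 : Real.log n ≤ (t:ℝ) * (φ ^ 2 / 4) := by linarith
    have h5 : Real.exp (-((t:ℝ) * (φ ^ 2 / 4))) ≤ Real.exp (-(Real.log n)) :=
      Real.exp_le_exp.mpr (by linarith)
    have h6 : Real.exp (-(Real.log n)) = 1 / (n:ℝ) := by
      rw [Real.exp_neg, Real.exp_log hnR, one_div]
    calc (1 - φ ^ 2 / 4) ^ t ≤ Real.exp (-(φ ^ 2 / 4)) ^ t := h1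
      _ = Real.exp (-((t:ℝ) * (φ ^ 2 / 4))) := h2
      _ ≤ Real.exp (-(Real.log n)) := h5
      _ = 1 / (n:ℝ) := h6
  have hXfin : S2 ((lazyWalk G d ^ t).mulVec (fun z => if z = x then (1:ℝ) else 0))
      ≤ 1 / (n:ℝ) + 1 / mcard := by
    calc S2 ((lazyWalk G d ^ t).mulVec (fun z => if z = x then (1:ℝ) else 0))
        ≤ (1 - φ ^ 2 / 4) ^ t + 1 / mcard := hX
      _ ≤ 1 / (n:ℝ) + 1 / mcard := by linarith
  -- take square roots
  have hsη : 0 < Real.sqrt η := Real.sqrt_pos.mpr hηpos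
  have hsη1 : Real.sqrt η ≤ 1 := by
    rw [show (1:ℝ) = Real.sqrt 1 by rw [Real.sqrt_one]]
    exact Real.sqrt_le_sqrt hη1
  have hkη1 : (1:ℝ) ≤ (k:ℝ) / Real.sqrt η := by
    rw [le_div_iff₀ hsη]
    calc 1 * Real.sqrt η = Real.sqrt η := by ring
      _ ≤ 1 := hsη1
      _ ≤ (k:ℝ) := hk1
  set A : ℝ := (k:ℝ) / Real.sqrt η * (n:ℝ) ^ (-(1/2:ℝ)) with hA
  have hnrpow : (0:ℝ) < (n:ℝ) ^ (-(1/2:ℝ)) := Real.rpow_pos_of_pos hnR _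
  have hApos : 0 < A := by
    rw [hA]
    have : (0:ℝ) < (k:ℝ) / Real.sqrt η := by positivity
    positivity
  have hsqrtn : Real.sqrt (1 / (n:ℝ)) = (n:ℝ) ^ (-(1/2:ℝ)) := by
    rw [one_div, Real.sqrt_inv, Real.sqrt_eq_rpow, ← Real.rpow_neg hnR.le]
  have hpiece1 : Real.sqrt (1 / (n:ℝ)) ≤ A := by
    rw [hsqrtn, hA]
    exact le_mul_of_one_le_left hnrpow.le hkη1
  have hAsq : A ^ 2 = (k:ℝ) ^ 2 / (η * n) := by
    rw [hA, mul_pow, div_pow, Real.sq_sqrt hηpos.le]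
    have hrp : ((n:ℝ) ^ (-(1/2:ℝ))) ^ 2 = (n:ℝ)⁻¹ := by
      rw [← Real.rpow_natCast ((n:ℝ) ^ (-(1/2:ℝ))) 2, ← Real.rpow_mul hnR.le]
      norm_num
      rw [Real.rpow_neg_one]
    rw [hrp]
    field_simp
  have hpiece2 : Real.sqrt (1 / mcard) ≤ A := by
    calc Real.sqrt (1 / mcard) ≤ Real.sqrt ((k:ℝ) ^ 2 / (η * n)) :=
          Real.sqrt_le_sqrt h1m
      _ = A := by rw [← hAsq, Real.sqrt_sq hApos.le]
  have hsqrtX : Real.sqrt (S2 ((lazyWalk G d ^ t).mulVec (fun z => if z = x then (1:ℝ) else 0)))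
      ≤ 2 * A := by
    have hsum2 : (1:ℝ) / n + 1 / mcard
        ≤ (Real.sqrt (1 / (n:ℝ)) + Real.sqrt (1 / mcard)) ^ 2 := by
      have e1 : Real.sqrt (1 / (n:ℝ)) ^ 2 = 1 / (n:ℝ) := Real.sq_sqrt (by positivity)
      have e2 : Real.sqrt (1 / mcard) ^ 2 = 1 / mcard := Real.sq_sqrt (by positivity)
      nlinarith [Real.sqrt_nonneg (1 / (n:ℝ)), Real.sqrt_nonneg (1 / mcard)]
    calc Real.sqrt (S2 ((lazyWalk G d ^ t).mulVec (fun z => if z = x then (1:ℝ) else 0)))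
        ≤ Real.sqrt ((Real.sqrt (1 / (n:ℝ)) + Real.sqrt (1 / mcard)) ^ 2) :=
          Real.sqrt_le_sqrt (le_trans hXfin hsum2)
      _ = Real.sqrt (1 / (n:ℝ)) + Real.sqrt (1 / mcard) := by
          rw [Real.sqrt_sq (by positivity)]
      _ ≤ A + A := add_le_add hpiece1 hpiece2
      _ = 2 * A := by ring
  -- final exponent comparison
  have hexp : (n:ℝ) ^ (-(1/2:ℝ)) ≤ (n:ℝ) ^ (-(1/2:ℝ) + 20 * ε / φ ^ 2) := by
    apply Real.rpow_le_rpow_of_exponent_le hn1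
    have : 0 ≤ 20 * ε / φ ^ 2 := by positivity
    linarith
  have hgoal : Real.sqrt (∑ y : Fin n,
      ((lazyWalk G d ^ t).mulVec (fun z => if z = x then (1:ℝ) else 0) y) ^ 2)
      = Real.sqrt (S2 ((lazyWalk G d ^ t).mulVec (fun z => if z = x then (1:ℝ) else 0))) := rfl
  rw [hgoal]
  calc Real.sqrt (S2 ((lazyWalk G d ^ t).mulVec (fun z => if z = x then (1:ℝ) else 0)))
      ≤ 2 * A := hsqrtX
    _ = 2 * ((k:ℝ) / Real.sqrt η) * (n:ℝ) ^ (-(1/2:ℝ)) := by rw [hA]; ring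
    _ ≤ 2 * ((k:ℝ) / Real.sqrt η) * (n:ℝ) ^ (-(1/2:ℝ) + 20 * ε / φ ^ 2) := by
        apply mul_le_mul_of_nonneg_left hexp
        positivity
end

section
/- Let L_G be the normalized Laplacian of a d-regular graph G that admits a (k,φ,ε)-clustering C₁,...,C_k with ε ≤ φ²/100. Let u be a unit-norm eigenvector of L_G with eigenvalue at most 2ε. Then ‖u‖_∞ ≤ n^{20ε/φ²}·√(160/minᵢ∈[k]|Cᵢ|). -/
open Matrix

/-!
Let `M = max u > 0` and consider the superlevel sets `S_j = {u ≥ M (1 - a)^j}` with `a = 2λ/φ`.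
While `S_j` holds at most half of every cluster, inner conductance gives at least `φ d |S_j|`
edges leaving `S_j`. Summing the eigenvalue equation over `S_j`, the total drop of `u` along
these edges is `λ d ∑_{S_j} u`, and `∑_{S_j} u ≤ (50/43) M (1 - a)^j |S_j|` because the layers
`S_{l+1} \ S_l` grow geometrically. An edge from `S_j` to the complement of `S_{j+1}` drops by
at least `a M (1 - a)^j`, so there are few such edges; most edges leaving `S_j` therefore land in
`S_{j+1} \ S_j`, and `d`-regularity gives `|S_{j+1}| ≥ (1 + 2φ/5) |S_j|`.
As `|S_j| ≤ n`, some `S_J` with `(1 + 2φ/5)^J ≤ n` covers more than half of a cluster `C_i`;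
then `‖u‖₂ = 1` gives `M (1 - a)^J ≤ √(2 / |C_i|)`, and `(1 - a)⁻¹ ≤ (1 + 2φ/5)^(20ε/φ²)`.
For `λ ≤ 0` the same count shows that already `S_0` covers more than half of a cluster.
-/

open Finset

section Superlevel

variable {α : Type*} [Fintype α] {u : α → ℝ} {θ θ' : ℝ}

noncomputable def superlevel (u : α → ℝ) (θ : ℝ) : Finset α := univ.filter (θ ≤ u ·)

@[simp]
lemma mem_superlevel {y : α} : y ∈ superlevel u θ ↔ θ ≤ u y := by
  simp [superlevel]

lemma superlevel_anti (h : θ' ≤ θ) : superlevel u θ ⊆ superlevel u θ' := fun _ hy =>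
  mem_superlevel.mpr (h.trans (mem_superlevel.mp hy))

lemma exists_lt_superlevel_eq (u : α → ℝ) (θ : ℝ) :
    ∃ θ' < θ, superlevel u θ' = superlevel u θ := by
  rcases (univ.filter (u · < θ)).eq_empty_or_nonempty with hT | hT
  · refine ⟨θ - 1, by linarith, ?_⟩
    ext y
    have : ¬ u y < θ := filter_eq_empty_iff.mp hT (mem_univ y)
    simp only [mem_superlevel]
    constructor <;> intro <;> linarith
  · obtain ⟨z, hz, hmax⟩ := exists_max_image _ u hT
    have hzθ : u z < θ := (mem_filter.mp hz).2
    refine ⟨(u z + θ) / 2, by linarith, ?_⟩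
    ext y
    simp only [mem_superlevel]
    constructor
    · intro hy
      by_contra hyθ
      have := hmax y (mem_filter.mpr ⟨mem_univ y, not_le.mp hyθ⟩)
      linarith
    · intro hy
      linarith

lemma sq_mul_card_superlevel_le (hθ : 0 ≤ θ) :
    θ ^ 2 * #(superlevel u θ) ≤ ∑ y, u y ^ 2 :=
  calc θ ^ 2 * #(superlevel u θ) = ∑ _y ∈ superlevel u θ, θ ^ 2 := by
        rw [sum_const, nsmul_eq_mul, mul_comm]
    _ ≤ ∑ y ∈ superlevel u θ, u y ^ 2 :=
        sum_le_sum fun y hy => pow_le_pow_left₀ hθ (mem_superlevel.mp hy) 2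
    _ ≤ ∑ y, u y ^ 2 := sum_le_sum_of_subset_of_nonneg (subset_univ _) fun y _ _ => sq_nonneg _

end Superlevel

section Layers

variable {α : Type*} [Fintype α] [DecidableEq α] {u : α → ℝ} {M a : ℝ}

-- Abel summation over the layers, using `u < M (1 - a) ^ l` off `superlevel u (M * (1 - a) ^ l)`.
lemma one_sub_mul_sum_superlevel_le (ha0 : 0 ≤ a) (ha1 : a ≤ 1) (hM : 0 ≤ M)
    (huM : ∀ y, u y ≤ M) (j : ℕ) :
    (1 - a) * ∑ y ∈ superlevel u (M * (1 - a) ^ j), u y ≤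
      M * (1 - a) ^ j * #(superlevel u (M * (1 - a) ^ j)) +
        a * ∑ l ∈ range j, M * (1 - a) ^ l * #(superlevel u (M * (1 - a) ^ l)) := by
  induction j with
  | zero =>
    simp only [pow_zero, mul_one, range_zero, sum_empty, mul_zero, add_zero]
    have hsum : 0 ≤ ∑ y ∈ superlevel u M, u y :=
      sum_nonneg fun y hy => hM.trans (mem_superlevel.mp hy)
    calc (1 - a) * ∑ y ∈ superlevel u M, u y ≤ ∑ y ∈ superlevel u M, u y := by nlinarith
      _ ≤ ∑ _y ∈ superlevel u M, M := sum_le_sum fun y _ => huM y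
      _ = M * #(superlevel u M) := by rw [sum_const, nsmul_eq_mul, mul_comm]
  | succ j ih =>
    have hθ : 0 ≤ M * (1 - a) ^ j := mul_nonneg hM (pow_nonneg (by linarith) j)
    rw [show M * (1 - a) ^ (j + 1) = (1 - a) * (M * (1 - a) ^ j) by ring]
    set θ := M * (1 - a) ^ j
    set S := superlevel u θ
    set S' := superlevel u ((1 - a) * θ)
    have hsub : S ⊆ S' := superlevel_anti (by nlinarith)
    have hnew : ∑ y ∈ S' \ S, u y ≤ θ * #(S' \ S) :=
      calc ∑ y ∈ S' \ S, u y ≤ ∑ _y ∈ S' \ S, θ := sum_le_sum fun y hy => by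
            have : ¬ θ ≤ u y := fun h => (mem_sdiff.mp hy).2 (mem_superlevel.mpr h)
            linarith
        _ = θ * #(S' \ S) := by rw [sum_const, nsmul_eq_mul, mul_comm]
    have hcard : (#S' : ℝ) = #(S' \ S) + #S := by
      exact_mod_cast (card_sdiff_add_card_eq_card hsub).symm
    rw [← sum_sdiff hsub, sum_range_succ, hcard]
    nlinarith [mul_le_mul_of_nonneg_left hnew (show 0 ≤ 1 - a by linarith)]

lemma sum_range_le_div_sub_one {e : ℕ → ℝ} {Q : ℝ} (hQ : 1 < Q) (he0 : 0 ≤ e 0) :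
    ∀ j, (∀ l < j, Q * e l ≤ e (l + 1)) → ∑ l ∈ range j, e l ≤ e j / (Q - 1)
  | 0, _ => by simpa using div_nonneg he0 (by linarith)
  | j + 1, he => by
    have ih := sum_range_le_div_sub_one hQ he0 j fun l hl => he l (by omega)
    rw [le_div_iff₀ (by linarith)] at ih
    rw [sum_range_succ, le_div_iff₀ (by linarith)]
    linarith [he j (by omega)]

-- `50 / 43 = (1 + 5 / 43) * (25 / 24)`: the geometric growth makes the tail `a * ∑_{l<j}` at most
-- `5 / 43` of the top term, and `1 - a ≥ 24 / 25`.
lemma sum_superlevel_le {φ : ℝ} (hφ1 : φ ≤ 1) (ha0 : 0 < a) (haφ : a ≤ φ / 25)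
    (hM : 0 ≤ M) (huM : ∀ y, u y ≤ M) (j : ℕ)
    (hgrow : ∀ l < j, (1 + 2 * φ / 5) * #(superlevel u (M * (1 - a) ^ l)) ≤
      #(superlevel u (M * (1 - a) ^ (l + 1)))) :
    ∑ y ∈ superlevel u (M * (1 - a) ^ j), u y ≤
      50 / 43 * (M * (1 - a) ^ j * #(superlevel u (M * (1 - a) ^ j))) := by
  have hθ : ∀ l, 0 ≤ M * (1 - a) ^ l := fun l => mul_nonneg hM (pow_nonneg (by linarith) l)
  set e : ℕ → ℝ := fun l => M * (1 - a) ^ l * #(superlevel u (M * (1 - a) ^ l)) with he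
  have he0 : ∀ l, 0 ≤ e l := fun l => mul_nonneg (hθ l) (Nat.cast_nonneg _)
  set Q := (1 - a) * (1 + 2 * φ / 5) with hQdef
  have hQ : 43 / 5 * a ≤ Q - 1 := by
    rw [hQdef]; nlinarith [mul_le_mul_of_nonneg_left hφ1 ha0.le]
  have hgeom := sum_range_le_div_sub_one (Q := Q) (by nlinarith) (he0 0) j fun l hl => by
    calc Q * e l
        = M * (1 - a) ^ (l + 1) * ((1 + 2 * φ / 5) * #(superlevel u (M * (1 - a) ^ l))) := by
          simp only [he, Q]; ring
      _ ≤ e (l + 1) := mul_le_mul_of_nonneg_left (hgrow l hl) (hθ (l + 1))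
  rw [le_div_iff₀ (by linarith)] at hgeom
  have hlower : a * ∑ l ∈ range j, e l ≤ 5 / 43 * e j := by
    nlinarith [mul_le_mul_of_nonneg_right hQ (sum_nonneg fun l (_ : l ∈ range j) => he0 l)]
  have hlayer := one_sub_mul_sum_superlevel_le ha0.le (by linarith) hM huM j
  have hsum : 0 ≤ ∑ y ∈ superlevel u (M * (1 - a) ^ j), u y :=
    sum_nonneg fun y hy => (hθ j).trans (mem_superlevel.mp hy)
  change (1 - a) * _ ≤ e j + a * ∑ l ∈ range j, e l at hlayer
  change _ ≤ 50 / 43 * e j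
  nlinarith

lemma pow_mul_le_of_forall_mul_le {f : ℕ → ℝ} {c : ℝ} (hc : 0 ≤ c) :
    ∀ j, (∀ l < j, c * f l ≤ f (l + 1)) → c ^ j * f 0 ≤ f j
  | 0, _ => by simp
  | j + 1, h =>
    calc c ^ (j + 1) * f 0 = c * (c ^ j * f 0) := by ring
      _ ≤ c * f j :=
          mul_le_mul_of_nonneg_left (pow_mul_le_of_forall_mul_le hc j fun l hl => h l (by omega)) hc
      _ ≤ f (j + 1) := h j (by omega)

lemma inv_one_sub_le_rpow {a x p : ℝ} (ha0 : 0 ≤ a) (ha1 : a < 1) (hx : 0 < x)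
    (h : a / (1 - a) ≤ p * (x / (1 + x))) : (1 - a)⁻¹ ≤ (1 + x) ^ p := by
  have h1a : 0 < 1 - a := by linarith
  have hp : 0 ≤ p := by
    by_contra! hp
    have := mul_neg_of_neg_of_pos hp (by positivity : 0 < x / (1 + x))
    have := div_nonneg ha0 h1a.le
    linarith
  rw [Real.rpow_def_of_pos (by linarith), ← Real.exp_log (inv_pos.mpr h1a), Real.exp_le_exp]
  calc Real.log (1 - a)⁻¹ ≤ (1 - a)⁻¹ - 1 := Real.log_le_sub_one_of_pos (inv_pos.mpr h1a)
    _ = a / (1 - a) := by field_simp; ring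
    _ ≤ p * (x / (1 + x)) := h
    _ = p * (1 - (1 + x)⁻¹) := by field_simp; ring
    _ ≤ p * Real.log (1 + x) :=
        mul_le_mul_of_nonneg_left (Real.one_sub_inv_le_log_of_pos (by linarith)) hp
    _ = Real.log (1 + x) * p := mul_comm _ _

end Layers

section Clustering

variable {α ι : Type*} [DecidableEq α] {C : ι → Finset α}

def IsSmallFor (C : ι → Finset α) (S : Finset α) : Prop :=
  ∀ i, 2 * #(S ∩ C i) ≤ #(C i)

lemma sum_sum_inter_eq_sum [Fintype ι] {M : Type*} [AddCommMonoid M] (hpart : ∀ v, ∃! i, v ∈ C i)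
    (S : Finset α) (f : α → M) : ∑ i, ∑ y ∈ S ∩ C i, f y = ∑ y ∈ S, f y := by
  classical
  choose c hc hcuniq using hpart
  have hfiber : ∀ i, S ∩ C i = S.filter (c · = i) := fun i => by
    ext y
    simp only [mem_inter, mem_filter]
    exact and_congr_right fun _ => ⟨fun h => (hcuniq y i h).symm, fun h => h ▸ hc y⟩
  simp only [hfiber]
  exact sum_fiberwise S c f

lemma exists_le_sqrt_of_not_isSmallFor [Fintype α] {u : α → ℝ} {θ : ℝ} (hθ : 0 ≤ θ)
    (hu : ∑ y, u y ^ 2 ≤ 1) (h : ¬ IsSmallFor C (superlevel u θ)) :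
    ∃ i, θ ≤ √(2 / #(C i)) := by
  obtain ⟨i, hi⟩ := not_forall.mp h
  refine ⟨i, ?_⟩
  have hinter : #(C i) < 2 * #(superlevel u θ) :=
    (not_le.mp hi).trans_le (Nat.mul_le_mul_left 2 (card_le_card inter_subset_left))
  have hCpos : (0 : ℝ) < #(C i) := by
    exact_mod_cast (Nat.pos_of_ne_zero fun h0 => by simp [card_eq_zero.mp h0] at hi)
  have hmass := sq_mul_card_superlevel_le (u := u) hθ
  rw [Real.le_sqrt hθ (by positivity), le_div_iff₀ hCpos]
  have : (#(C i) : ℝ) ≤ 2 * #(superlevel u θ) := by exact_mod_cast hinter.le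
  nlinarith [sq_nonneg θ]

end Clustering

def HasInnerConductance {n k : ℕ} (G : SimpleGraph (Fin n)) [DecidableRel G.Adj] (d : ℕ) (φ : ℝ)
    (C : Fin k → Finset (Fin n)) : Prop :=
  ∀ i, ∀ S ⊆ C i, S.Nonempty → 2 * S.card ≤ (C i).card →
    φ * ((d : ℝ) * S.card) ≤ (eCount G S (C i \ S) : ℝ)

section Graph

variable {n : ℕ} (G : SimpleGraph (Fin n)) [DecidableRel G.Adj]

lemma eCount_union_right (A : Finset (Fin n)) {B₁ B₂ : Finset (Fin n)} (h : Disjoint B₁ B₂) :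
    eCount G A (B₁ ∪ B₂) = eCount G A B₁ + eCount G A B₂ := by
  simp only [eCount, sum_union h, sum_add_distrib]

lemma eCount_mono_right (A : Finset (Fin n)) {B B' : Finset (Fin n)} (h : B ⊆ B') :
    eCount G A B ≤ eCount G A B' :=
  sum_le_sum fun _ _ => sum_le_sum_of_subset h

lemma eCount_le_mul_card {d : ℕ} (hreg : G.IsRegularOfDegree d) (A B : Finset (Fin n)) :
    eCount G A B ≤ d * #B := by
  have hdeg : ∀ y, ∑ x ∈ A, (if G.Adj x y then 1 else 0) ≤ d := fun y =>
    calc ∑ x ∈ A, (if G.Adj x y then 1 else 0)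
        ≤ ∑ x, (if G.Adj y x then 1 else 0) := by
          simp only [G.adj_comm]; exact sum_le_sum_of_subset (subset_univ A)
      _ = d := by rw [← sum_filter, sum_const, smul_eq_mul, mul_one,
          ← SimpleGraph.neighborFinset_eq_filter, G.card_neighborFinset_eq_degree, hreg y]
  calc eCount G A B = ∑ y ∈ B, ∑ x ∈ A, (if G.Adj x y then 1 else 0) := sum_comm
    _ ≤ ∑ _y ∈ B, d := sum_le_sum fun y _ => hdeg y
    _ = d * #B := by rw [sum_const, smul_eq_mul, mul_comm]

lemma mul_card_le_eCount_compl {k d : ℕ} {φ : ℝ} {C : Fin k → Finset (Fin n)}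
    (hpart : ∀ v, ∃! i, v ∈ C i)
    (hinner : HasInnerConductance G d φ C)
    {S : Finset (Fin n)} (hS : IsSmallFor C S) :
    φ * ((d : ℝ) * #S) ≤ eCount G S Sᶜ := by
  have hcard : ∑ i, #(S ∩ C i) = #S := by
    simp only [card_eq_sum_ones]
    exact sum_sum_inter_eq_sum hpart S fun _ => 1
  have hpiece : ∀ i, φ * ((d : ℝ) * #(S ∩ C i)) ≤ eCount G (S ∩ C i) Sᶜ := fun i => by
    rcases (S ∩ C i).eq_empty_or_nonempty with h | h
    · simp [h]
    · have hsdiff : C i \ (S ∩ C i) = C i \ S := by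
        ext z; simp only [mem_sdiff, mem_inter]; tauto
      have hsub : C i \ S ⊆ Sᶜ := fun z hz => mem_compl.mpr (mem_sdiff.mp hz).2
      calc φ * ((d : ℝ) * #(S ∩ C i)) ≤ eCount G (S ∩ C i) (C i \ S) :=
            hsdiff ▸ hinner i _ inter_subset_right h (hS i)
        _ ≤ eCount G (S ∩ C i) Sᶜ := by exact_mod_cast eCount_mono_right G _ hsub
  calc φ * ((d : ℝ) * #S) = ∑ i, φ * ((d : ℝ) * #(S ∩ C i)) := by
        rw [← mul_sum, ← mul_sum, ← hcard, Nat.cast_sum]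
    _ ≤ ∑ i, (eCount G (S ∩ C i) Sᶜ : ℝ) := sum_le_sum fun i _ => hpiece i
    _ = eCount G S Sᶜ := by
        rw [← Nat.cast_sum]; exact congrArg _ (sum_sum_inter_eq_sum hpart S _)

lemma sum_boundary_eq_sum_sum (u : Fin n → ℝ) (S : Finset (Fin n)) :
    ∑ y ∈ S, ∑ z ∈ Sᶜ, (if G.Adj y z then u y - u z else 0) =
      ∑ y ∈ S, ∑ z, (if G.Adj y z then u y - u z else 0) := by
  have hinside : ∑ y ∈ S, ∑ z ∈ S, (if G.Adj y z then u y - u z else 0) = 0 := by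
    have hswap : ∑ y ∈ S, ∑ z ∈ S, (if G.Adj y z then u y - u z else 0) =
        -∑ y ∈ S, ∑ z ∈ S, (if G.Adj y z then u y - u z else 0) := by
      conv_lhs => rw [sum_comm]
      simp only [← sum_neg_distrib]
      refine sum_congr rfl fun y _ => sum_congr rfl fun z _ => ?_
      simp only [G.adj_comm z y]
      split_ifs <;> ring
    linarith
  simp only [← sum_add_sum_compl S, sum_add_distrib, hinside, zero_add]

lemma sum_adj_sub_eq_of_mulVec_eq {d : ℕ} (hd : 0 < d) (hreg : G.IsRegularOfDegree d)
    {u : Fin n → ℝ} {lam : ℝ}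
    (heig : ((1 : Matrix (Fin n) (Fin n) ℝ) - (d : ℝ)⁻¹ • G.adjMatrix ℝ).mulVec u = lam • u)
    (y : Fin n) :
    ∑ z, (if G.Adj y z then u y - u z else 0) = lam * (d * u y) := by
  have hy := congrFun heig y
  simp only [sub_mulVec, smul_mulVec, one_mulVec, Pi.sub_apply, Pi.smul_apply,
    SimpleGraph.adjMatrix_mulVec_apply, smul_eq_mul] at hy
  have hd' : (d : ℝ) ≠ 0 := by positivity
  rw [← sum_filter, ← SimpleGraph.neighborFinset_eq_filter, sum_sub_distrib, sum_const,
    G.card_neighborFinset_eq_degree, hreg y, nsmul_eq_mul]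
  field_simp at hy
  linarith

lemma sum_boundary_eq_of_mulVec_eq {d : ℕ} (hd : 0 < d) (hreg : G.IsRegularOfDegree d)
    {u : Fin n → ℝ} {lam : ℝ}
    (heig : ((1 : Matrix (Fin n) (Fin n) ℝ) - (d : ℝ)⁻¹ • G.adjMatrix ℝ).mulVec u = lam • u)
    (S : Finset (Fin n)) :
    ∑ y ∈ S, ∑ z ∈ Sᶜ, (if G.Adj y z then u y - u z else 0) = lam * (d * ∑ y ∈ S, u y) := by
  simp only [sum_boundary_eq_sum_sum, sum_adj_sub_eq_of_mulVec_eq G hd hreg heig, mul_sum]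

lemma sub_mul_eCount_le_sum_boundary (u : Fin n → ℝ) {θ θ' : ℝ} (hθ : θ' ≤ θ) :
    (θ - θ') * eCount G (superlevel u θ) (superlevel u θ')ᶜ ≤
      ∑ y ∈ superlevel u θ, ∑ z ∈ (superlevel u θ)ᶜ, (if G.Adj y z then u y - u z else 0) := by
  have hsub : (superlevel u θ')ᶜ ⊆ (superlevel u θ)ᶜ := compl_subset_compl.mpr (superlevel_anti hθ)
  simp only [eCount, Nat.cast_sum, Nat.cast_ite, Nat.cast_one, Nat.cast_zero, mul_sum]
  refine sum_le_sum fun y hy => ?_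
  have hy : θ ≤ u y := mem_superlevel.mp hy
  calc ∑ z ∈ (superlevel u θ')ᶜ, (θ - θ') * (if G.Adj y z then 1 else 0)
      ≤ ∑ z ∈ (superlevel u θ')ᶜ, (if G.Adj y z then u y - u z else 0) := by
        refine sum_le_sum fun z hz => ?_
        have hz : u z < θ' := by simpa using hz
        split_ifs <;> linarith
    _ ≤ _ := by
        refine sum_le_sum_of_subset_of_nonneg hsub fun z hz _ => ?_
        have hz : u z < θ := by simpa using hz
        split_ifs <;> linarith

end Graph

section Eigenvector

variable {n k d : ℕ} {G : SimpleGraph (Fin n)} [DecidableRel G.Adj] {C : Fin k → Finset (Fin n)}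
  {φ lam : ℝ} {u : Fin n → ℝ}

lemma sub_mul_expansion_le_of_isSmallFor (hd : 0 < d) (hreg : G.IsRegularOfDegree d)
    (hpart : ∀ v, ∃! i, v ∈ C i)
    (hinner : HasInnerConductance G d φ C)
    (heig : ((1 : Matrix (Fin n) (Fin n) ℝ) - (d : ℝ)⁻¹ • G.adjMatrix ℝ).mulVec u = lam • u)
    {θ θ' : ℝ} (hθ : θ' ≤ θ) (hS : IsSmallFor C (superlevel u θ)) :
    (θ - θ') * (φ * (d * #(superlevel u θ)) - d * (#(superlevel u θ') - #(superlevel u θ))) ≤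
      lam * (d * ∑ y ∈ superlevel u θ, u y) := by
  set S := superlevel u θ
  set S' := superlevel u θ'
  have hsub : S ⊆ S' := superlevel_anti hθ
  have hcompl : Sᶜ = S'ᶜ ∪ (S' \ S) := by
    rw [compl_eq_univ_sdiff, compl_eq_univ_sdiff, sdiff_union_sdiff_cancel (subset_univ _) hsub]
  have hdisj : Disjoint S'ᶜ (S' \ S) := disjoint_compl_left.mono_right sdiff_subset
  have hsplit : (eCount G S Sᶜ : ℝ) = eCount G S S'ᶜ + eCount G S (S' \ S) := by
    rw [hcompl, eCount_union_right G _ hdisj, Nat.cast_add]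
  have hnew : (eCount G S (S' \ S) : ℝ) ≤ d * (#S' - #S) := by
    rw [← Nat.cast_sub (card_le_card hsub), ← card_sdiff_of_subset hsub]
    exact_mod_cast eCount_le_mul_card G hreg _ _
  have hexp := mul_card_le_eCount_compl G hpart hinner hS
  calc (θ - θ') * (φ * (d * #S) - d * (#S' - #S)) ≤ (θ - θ') * eCount G S S'ᶜ :=
        mul_le_mul_of_nonneg_left (by linarith) (sub_nonneg.mpr hθ)
    _ ≤ ∑ y ∈ S, ∑ z ∈ Sᶜ, (if G.Adj y z then u y - u z else 0) :=
        sub_mul_eCount_le_sum_boundary G u hθ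
    _ = lam * (d * ∑ y ∈ S, u y) := sum_boundary_eq_of_mulVec_eq G hd hreg heig S

lemma card_superlevel_growth (hd : 0 < d) (hreg : G.IsRegularOfDegree d)
    (hpart : ∀ v, ∃! i, v ∈ C i)
    (hinner : HasInnerConductance G d φ C)
    (heig : ((1 : Matrix (Fin n) (Fin n) ℝ) - (d : ℝ)⁻¹ • G.adjMatrix ℝ).mulVec u = lam • u)
    {θ a : ℝ} (hθ : 0 < θ) (ha0 : 0 < a) (hφ : 0 < φ) (hlam : lam ≤ a * φ / 2)
    (hS : IsSmallFor C (superlevel u θ))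
    (hsum : ∑ y ∈ superlevel u θ, u y ≤ 50 / 43 * (θ * #(superlevel u θ))) :
    (1 + 2 * φ / 5) * #(superlevel u θ) ≤ #(superlevel u ((1 - a) * θ)) := by
  set s : ℝ := ((superlevel u θ).card : ℝ)
  set s' : ℝ := ((superlevel u ((1 - a) * θ)).card : ℝ)
  have hsum0 : 0 ≤ ∑ y ∈ superlevel u θ, u y :=
    sum_nonneg fun y hy => hθ.le.trans (mem_superlevel.mp hy)
  have hstep := sub_mul_expansion_le_of_isSmallFor hd hreg hpart hinner heig
    (θ' := (1 - a) * θ) (by nlinarith) hS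
  have hscaled : a * θ * d * (φ * s - (s' - s)) ≤ a * θ * d * (25 / 43 * φ * s) :=
    calc a * θ * d * (φ * s - (s' - s)) = (θ - (1 - a) * θ) * (φ * (d * s) - d * (s' - s)) := by
          ring
      _ ≤ lam * (d * ∑ y ∈ superlevel u θ, u y) := hstep
      _ ≤ a * φ / 2 * (d * ∑ y ∈ superlevel u θ, u y) :=
          mul_le_mul_of_nonneg_right hlam (by positivity)
      _ ≤ a * φ / 2 * (d * (50 / 43 * (θ * s))) := by gcongr
      _ = a * θ * d * (25 / 43 * φ * s) := by ring
  have := le_of_mul_le_mul_left hscaled (by positivity)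
  nlinarith [mul_nonneg hφ.le (Nat.cast_nonneg _ : (0 : ℝ) ≤ s)]

lemma card_superlevel_growth_of_isSmallFor (hd : 0 < d) (hreg : G.IsRegularOfDegree d)
    (hpart : ∀ v, ∃! i, v ∈ C i)
    (hinner : HasInnerConductance G d φ C)
    (heig : ((1 : Matrix (Fin n) (Fin n) ℝ) - (d : ℝ)⁻¹ • G.adjMatrix ℝ).mulVec u = lam • u)
    {M a : ℝ} (hφ : 0 < φ) (hφ1 : φ ≤ 1) (ha0 : 0 < a) (haφ : a ≤ φ / 25)
    (hlam : lam ≤ a * φ / 2) (hM : 0 < M) (huM : ∀ y, u y ≤ M) (j : ℕ)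
    (hsmall : ∀ l < j, IsSmallFor C (superlevel u (M * (1 - a) ^ l))) :
    ∀ l < j, (1 + 2 * φ / 5) * #(superlevel u (M * (1 - a) ^ l)) ≤
      #(superlevel u (M * (1 - a) ^ (l + 1))) := by
  induction j with
  | zero => intro l hl; omega
  | succ j ih =>
    have ih := ih fun l hl => hsmall l (by omega)
    intro l hl
    rcases Nat.lt_succ_iff_lt_or_eq.mp hl with hl | rfl
    · exact ih l hl
    · rw [show M * (1 - a) ^ (l + 1) = (1 - a) * (M * (1 - a) ^ l) by ring]
      have h1a : 0 < 1 - a := by linarith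
      exact card_superlevel_growth hd hreg hpart hinner heig (by positivity) ha0 hφ hlam
        (hsmall l (by omega)) (sum_superlevel_le hφ1 ha0 haφ hM.le huM l ih)

lemma exists_not_isSmallFor_superlevel (hd : 0 < d) (hreg : G.IsRegularOfDegree d)
    (hpart : ∀ v, ∃! i, v ∈ C i)
    (hinner : HasInnerConductance G d φ C)
    (heig : ((1 : Matrix (Fin n) (Fin n) ℝ) - (d : ℝ)⁻¹ • G.adjMatrix ℝ).mulVec u = lam • u)
    {a : ℝ} {x₀ : Fin n} (hφ : 0 < φ) (hφ1 : φ ≤ 1) (ha0 : 0 < a) (haφ : a ≤ φ / 25)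
    (hlam : lam ≤ a * φ / 2) (hM : 0 < u x₀) (huM : ∀ y, u y ≤ u x₀) :
    ∃ J, ¬ IsSmallFor C (superlevel u (u x₀ * (1 - a) ^ J)) ∧ (1 + 2 * φ / 5) ^ J ≤ (n : ℝ) := by
  classical
  have hpow : ∀ j, (∀ l < j, IsSmallFor C (superlevel u (u x₀ * (1 - a) ^ l))) →
      (1 + 2 * φ / 5) ^ j ≤ (n : ℝ) := fun j hsmall => by
    have htop : (1 : ℝ) ≤ #(superlevel u (u x₀ * (1 - a) ^ 0)) := by
      exact_mod_cast card_pos.mpr ⟨x₀, by simp⟩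
    calc (1 + 2 * φ / 5) ^ j ≤ (1 + 2 * φ / 5) ^ j * #(superlevel u (u x₀ * (1 - a) ^ 0)) :=
          le_mul_of_one_le_right (by positivity) htop
      _ ≤ #(superlevel u (u x₀ * (1 - a) ^ j)) := pow_mul_le_of_forall_mul_le (by positivity) j
          (card_superlevel_growth_of_isSmallFor hd hreg hpart hinner heig hφ hφ1 ha0 haφ hlam
            hM huM j hsmall)
      _ ≤ n := by exact_mod_cast (card_le_univ _).trans (Fintype.card_fin n).le
  have hex : ∃ j, ¬ IsSmallFor C (superlevel u (u x₀ * (1 - a) ^ j)) := by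
    by_contra! hall
    obtain ⟨j, hj⟩ := pow_unbounded_of_one_lt (n : ℝ) (by linarith : (1 : ℝ) < 1 + 2 * φ / 5)
    exact (hpow j fun l _ => hall l).not_gt hj
  exact ⟨Nat.find hex, Nat.find_spec hex,
    hpow _ fun l hl => not_not.mp (Nat.find_min hex hl)⟩

lemma not_isSmallFor_superlevel_of_nonpos (hd : 0 < d) (hreg : G.IsRegularOfDegree d)
    (hpart : ∀ v, ∃! i, v ∈ C i)
    (hinner : HasInnerConductance G d φ C)
    (heig : ((1 : Matrix (Fin n) (Fin n) ℝ) - (d : ℝ)⁻¹ • G.adjMatrix ℝ).mulVec u = lam • u)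
    {x₀ : Fin n} (hφ : 0 < φ) (hlam : lam ≤ 0) (hM : 0 ≤ u x₀) :
    ¬ IsSmallFor C (superlevel u (u x₀)) := by
  intro hS
  obtain ⟨θ', hθ', hsame⟩ := exists_lt_superlevel_eq u (u x₀)
  have hstep := sub_mul_expansion_le_of_isSmallFor hd hreg hpart hinner heig hθ'.le hS
  rw [hsame, sub_self, mul_zero, sub_zero] at hstep
  have hcard : (0 : ℝ) < #(superlevel u (u x₀)) := by
    exact_mod_cast card_pos.mpr ⟨x₀, by simp⟩
  have hsum : 0 ≤ ∑ y ∈ superlevel u (u x₀), u y :=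
    sum_nonneg fun y hy => hM.trans (mem_superlevel.mp hy)
  have hlhs : 0 < (u x₀ - θ') * (φ * (d * #(superlevel u (u x₀)))) := by
    have : (0 : ℝ) < d := by exact_mod_cast hd
    have : 0 < u x₀ - θ' := by linarith
    positivity
  have hrhs : lam * (d * ∑ y ∈ superlevel u (u x₀), u y) ≤ 0 :=
    mul_nonpos_of_nonpos_of_nonneg hlam (by positivity)
  linarith

lemma exists_le_sqrt_mul_rpow_of_growth (hd : 0 < d) (hreg : G.IsRegularOfDegree d)
    (hpart : ∀ v, ∃! i, v ∈ C i) (hinner : HasInnerConductance G d φ C) (hu : ∑ x, u x ^ 2 ≤ 1)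
    (heig : ((1 : Matrix (Fin n) (Fin n) ℝ) - (d : ℝ)⁻¹ • G.adjMatrix ℝ).mulVec u = lam • u)
    {a p : ℝ} (hφ : 0 < φ) (hφ1 : φ ≤ 1) (ha0 : 0 < a) (haφ : a ≤ φ / 25)
    (hlam : lam ≤ a * φ / 2) (hp : 0 ≤ p) (hinv : (1 - a)⁻¹ ≤ (1 + 2 * φ / 5) ^ p)
    {x₀ : Fin n} (hM : 0 < u x₀) (huM : ∀ y, u y ≤ u x₀) :
    ∃ i, u x₀ ≤ √(2 / #(C i)) * (n : ℝ) ^ p := by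
  obtain ⟨J, hJ, hJn⟩ :=
    exists_not_isSmallFor_superlevel hd hreg hpart hinner heig hφ hφ1 ha0 haφ hlam hM huM
  have h1a : 0 < 1 - a := by linarith
  obtain ⟨i, hi⟩ := exists_le_sqrt_of_not_isSmallFor (by positivity) hu hJ
  refine ⟨i, ?_⟩
  calc u x₀ = u x₀ * (1 - a) ^ J * ((1 - a)⁻¹) ^ J := by
        rw [inv_pow, mul_assoc, mul_inv_cancel₀ (by positivity), mul_one]
    _ ≤ √(2 / #(C i)) * ((1 + 2 * φ / 5) ^ p) ^ J :=
        mul_le_mul hi (pow_le_pow_left₀ (by positivity) hinv J) (by positivity) (by positivity)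
    _ = √(2 / #(C i)) * ((1 + 2 * φ / 5) ^ J) ^ p := by
        rw [← Real.rpow_mul_natCast (by positivity), mul_comm p,
          Real.rpow_natCast_mul (by positivity)]
    _ ≤ √(2 / #(C i)) * (n : ℝ) ^ p := by gcongr

lemma exists_le_rpow_mul_sqrt (hd : 0 < d) {ε : ℝ} (hφ : 0 < φ) (hφ1 : φ ≤ 1) (hε : 0 ≤ ε)
    (hεφ : ε ≤ φ ^ 2 / 100) (hreg : G.IsRegularOfDegree d) (hpart : ∀ v, ∃! i, v ∈ C i)
    (hinner : HasInnerConductance G d φ C) (hu : ∑ x, u x ^ 2 ≤ 1) (hlam : lam ≤ 2 * ε)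
    (heig : ((1 : Matrix (Fin n) (Fin n) ℝ) - (d : ℝ)⁻¹ • G.adjMatrix ℝ).mulVec u = lam • u)
    (x : Fin n) :
    ∃ i, u x ≤ (n : ℝ) ^ (20 * ε / φ ^ 2) * √(2 / #(C i)) := by
  set p := 20 * ε / φ ^ 2
  have hp : 0 ≤ p := by positivity
  have : Nonempty (Fin n) := ⟨x⟩
  obtain ⟨x₀, huM⟩ := Finite.exists_max u
  suffices ∃ i, u x₀ ≤ (n : ℝ) ^ p * √(2 / #(C i)) from this.imp fun i h => (huM x).trans h
  rcases le_or_gt (u x₀) 0 with hM | hM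
  · exact ⟨(hpart x₀).exists.choose, hM.trans (by positivity)⟩
  rcases le_or_gt lam 0 with hlam0 | hlam0
  · obtain ⟨i, hi⟩ := exists_le_sqrt_of_not_isSmallFor hM.le hu
      (not_isSmallFor_superlevel_of_nonpos hd hreg hpart hinner heig hφ hlam0 hM.le)
    have hnp : 1 ≤ (n : ℝ) ^ p := Real.one_le_rpow (by exact_mod_cast x.pos) hp
    exact ⟨i, hi.trans (le_mul_of_one_le_left (Real.sqrt_nonneg _) hnp)⟩
  set a := 2 * lam / φ
  have ha0 : 0 < a := by positivity
  have haφ : a ≤ φ / 25 := by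
    rw [div_le_div_iff₀ hφ (by norm_num)]; nlinarith
  have hlam' : lam ≤ a * φ / 2 := by rw [div_mul_cancel₀ _ hφ.ne']; linarith
  have hinv : (1 - a)⁻¹ ≤ (1 + 2 * φ / 5) ^ p := by
    refine inv_one_sub_le_rpow ha0.le (by linarith) (by positivity) ?_
    have hpa : 5 * a ≤ p * φ := by
      have hpφ : p * φ = 20 * ε / φ := by simp only [p]; field_simp
      rw [hpφ, show 5 * a = 10 * lam / φ by ring]
      exact div_le_div_of_nonneg_right (by linarith) hφ.le
    have hq : 2 * φ / 7 ≤ 2 * φ / 5 / (1 + 2 * φ / 5) := by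
      rw [le_div_iff₀ (by positivity)]; nlinarith
    have ha : a / (1 - a) ≤ 25 / 24 * a := by
      rw [div_le_iff₀ (by linarith)]; nlinarith
    nlinarith [mul_le_mul_of_nonneg_left hq hp]
  obtain ⟨i, hi⟩ := exists_le_sqrt_mul_rpow_of_growth hd hreg hpart hinner hu heig hφ hφ1
    ha0 haφ hlam' hp hinv hM huM
  exact ⟨i, hi.trans_eq (mul_comm _ _)⟩

end Eigenvector

theorem stmt17_general (n k d : ℕ) (hk : 0 < k) (hd : 0 < d)
    (φ ε : ℝ) (hφ : 0 < φ) (hφ1 : φ < 1) (hε : 0 ≤ ε) (hεφ : ε ≤ φ ^ 2 / 100)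
    (G : SimpleGraph (Fin n)) [DecidableRel G.Adj] (hreg : G.IsRegularOfDegree d)
    (C : Fin k → Finset (Fin n))
    (hpart : ∀ v : Fin n, ∃! i, v ∈ C i)
    (hCne : ∀ i, (C i).Nonempty)
    (hinner : ∀ i, ∀ S ⊆ C i, S.Nonempty → 2 * S.card ≤ (C i).card →
      φ * ((d : ℝ) * S.card) ≤ (eCount G S (C i \ S) : ℝ))
    (u : Fin n → ℝ) (hu : ∑ x, u x ^ 2 = 1)
    (lam : ℝ) (hlam : lam ≤ 2 * ε)
    (heig : ((1 : Matrix (Fin n) (Fin n) ℝ) - (d : ℝ)⁻¹ • G.adjMatrix ℝ).mulVec u = lam • u) :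
    ∀ x, |u x| ≤ (n : ℝ) ^ (20 * ε / φ ^ 2) *
      Real.sqrt (160 /
        (Finset.univ.inf' (Finset.univ_nonempty_iff.mpr ⟨⟨0, hk⟩⟩)
          fun i : Fin k => ((C i).card : ℝ))) := by
  intro x
  set m := Finset.univ.inf' (Finset.univ_nonempty_iff.mpr ⟨⟨0, hk⟩⟩)
    fun i : Fin k => ((C i).card : ℝ)
  have hm : 0 < m := (lt_inf'_iff _).mpr fun i _ => by exact_mod_cast (hCne i).card_pos
  have hcluster : ∀ i, (n : ℝ) ^ (20 * ε / φ ^ 2) * √(2 / #(C i)) ≤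
      (n : ℝ) ^ (20 * ε / φ ^ 2) * √(160 / m) := fun i => by
    gcongr ?_ * √?_
    calc 2 / (#(C i) : ℝ) ≤ 2 / m :=
          div_le_div_of_nonneg_left (by norm_num) hm (inf'_le _ (mem_univ i))
      _ ≤ 160 / m := by gcongr; norm_num
  have hneg : ((1 : Matrix (Fin n) (Fin n) ℝ) - (d : ℝ)⁻¹ • G.adjMatrix ℝ).mulVec (-u) =
      lam • -u := by
    rw [mulVec_neg, heig, smul_neg]
  obtain ⟨i, hi⟩ := exists_le_rpow_mul_sqrt hd hφ hφ1.le hε hεφ hreg hpart hinner hu.le hlam heig x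
  obtain ⟨j, hj⟩ := exists_le_rpow_mul_sqrt hd hφ hφ1.le hε hεφ hreg hpart hinner
    (by simp [hu]) hlam hneg x
  rw [Pi.neg_apply] at hj
  exact abs_le.mpr ⟨by linarith [hcluster j], hi.trans (hcluster i)⟩

/-- Let `G` be a `d`-regular graph admitting a
`(k,φ,ε)`-clustering `C₁,…,C_k` with `ε ≤ φ²/100`, and let `u` be a unit-norm
eigenvector of the normalized Laplacian `L_G = I − A_G/d` with eigenvalue at most
`2ε`.  Then `‖u‖_∞ ≤ n^{20ε/φ²}·√(160/minᵢ|Cᵢ|)`. -/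
theorem stmt17 (n k d : ℕ) (hk : 0 < k) (hd : 0 < d)
    (φ ε : ℝ) (hφ : 0 < φ) (hφ1 : φ < 1) (hε : 0 ≤ ε) (hεφ : ε ≤ φ ^ 2 / 100)
    (G : SimpleGraph (Fin n)) [DecidableRel G.Adj] (hreg : G.IsRegularOfDegree d)
    (C : Fin k → Finset (Fin n))
    (hpart : ∀ v : Fin n, ∃! i, v ∈ C i)
    (hCne : ∀ i, (C i).Nonempty)
    (hinner : ∀ i, ∀ S ⊆ C i, S.Nonempty → 2 * S.card ≤ (C i).card →
      φ * ((d : ℝ) * S.card) ≤ (eCount G S (C i \ S) : ℝ))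
    (houter : ∀ i, (eCount G (C i) (C i)ᶜ : ℝ) ≤ ε * ((d : ℝ) * (C i).card))
    (u : Fin n → ℝ) (hu : ∑ x, u x ^ 2 = 1)
    (lam : ℝ) (hlam : lam ≤ 2 * ε)
    (heig : ((1 : Matrix (Fin n) (Fin n) ℝ) - (d : ℝ)⁻¹ • G.adjMatrix ℝ).mulVec u = lam • u) :
    ∀ x, |u x| ≤ (n : ℝ) ^ (20 * ε / φ ^ 2) *
      Real.sqrt (160 /
        (Finset.univ.inf' (Finset.univ_nonempty_iff.mpr ⟨⟨0, hk⟩⟩)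
          fun i : Fin k => ((C i).card : ℝ))) :=
  stmt17_general n k d hk hd φ ε hφ hφ1 hε hεφ G hreg C hpart hCne hinner u hu lam hlam heig
end

section
/- Let G be a d-regular graph on n vertices that admits a (k,φ,ε)-clustering. Then the k-th and (k+1)-st smallest eigenvalues of the normalized Laplacian L_G satisfy λ_k ≤ 2ε and λ_{k+1} ≥ φ²/2. -/
open Matrix

lemma eCount_comm {n : ℕ} (G : SimpleGraph (Fin n)) [DecidableRel G.Adj]
    (A B : Finset (Fin n)) : eCount G A B = eCount G B A := by
  rw [eCount, eCount, Finset.sum_comm]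
  exact Finset.sum_congr rfl fun y _ => Finset.sum_congr rfl fun x _ =>
    if_congr (G.adj_comm x y) rfl rfl


/-- Layer-cake representation of a nonnegative function on a finset. -/
lemma layercake {n : ℕ} (C : Finset (Fin n)) (w : Fin n → ℝ) (hw : ∀ v, 0 ≤ w v) :
    ∃ (r : ℕ) (τ : ℕ → ℝ),
      (∀ s ∈ Finset.Ico 1 r, 0 < τ s ∧ τ (s-1) ≤ τ s) ∧
      (∀ v ∈ C, w v = ∑ s ∈ Finset.Ico 1 r,
        (τ s - τ (s-1)) * (if τ s ≤ w v then 1 else 0)) := by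
  classical
  set T : Finset ℝ := insert 0 (C.image w) with hT
  have h0T : (0:ℝ) ∈ T := Finset.mem_insert_self _ _
  have hTpos : ∀ a ∈ T, 0 ≤ a := by
    intro a ha
    rcases Finset.mem_insert.1 ha with h | h
    · simp [h]
    · rcases Finset.mem_image.1 h with ⟨v, _, rfl⟩; exact hw v
  set r : ℕ := T.card with hr
  have hrpos : 0 < r := Finset.card_pos.2 ⟨0, h0T⟩
  set e := T.orderIsoOfFin rfl with he
  set τ : ℕ → ℝ := fun s => if h : s < r then (e ⟨s, h⟩ : ℝ) else 0 with hτ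
  have hmem : ∀ s (h : s < r), τ s ∈ T := by
    intro s h; simp only [hτ, dif_pos h]; exact (e ⟨s, h⟩).2
  have hmono : ∀ s t (hs : s < r) (ht : t < r), s ≤ t → τ s ≤ τ t := by
    intro s t hs ht hst
    simp only [hτ, dif_pos hs, dif_pos ht]
    exact_mod_cast Subtype.coe_le_coe.2 (e.monotone (by exact hst))
  have hle_iff : ∀ s t (hs : s < r) (ht : t < r), (τ s ≤ τ t ↔ s ≤ t) := by
    intro s t hs ht
    simp only [hτ, dif_pos hs, dif_pos ht]
    rw [Subtype.coe_le_coe, e.le_iff_le]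
    rfl
  -- τ 0 = 0
  have hτ0 : τ 0 = 0 := by
    have h1 : τ 0 ≤ 0 := by
      have := e.symm ⟨0, h0T⟩
      have h2 : τ (e.symm ⟨0, h0T⟩).val = 0 := by
        simp only [hτ, dif_pos (e.symm ⟨0, h0T⟩).isLt]
        rw [dif_pos (show ((e.symm ⟨0, h0T⟩ : Fin T.card) : ℕ) < r from (e.symm ⟨0, h0T⟩).isLt), Fin.eta, e.apply_symm_apply]
      calc τ 0 ≤ τ (e.symm ⟨0, h0T⟩).val := hmono _ _ hrpos (e.symm ⟨0, h0T⟩).isLt (Nat.zero_le _)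
        _ = 0 := h2
    exact le_antisymm h1 (hTpos _ (hmem 0 hrpos))
  -- representation for each a ∈ T
  have hrep : ∀ a ∈ T, a = ∑ s ∈ Finset.Ico 1 r, (τ s - τ (s-1)) * (if τ s ≤ a then 1 else 0) := by
    intro a ha
    set j : Fin r := e.symm ⟨a, ha⟩ with hj
    have hja : τ j.val = a := by
      simp only [hτ, dif_pos j.isLt]; rw [Fin.eta, hj, e.apply_symm_apply]
    have hind : ∀ s ∈ Finset.Ico 1 r, (if τ s ≤ a then (1:ℝ) else 0) = if s ≤ j.val then 1 else 0 := by
      intro s hs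
      rw [Finset.mem_Ico] at hs
      rw [← hja, if_congr (hle_iff s j.val hs.2 j.isLt) rfl rfl]
    calc a = τ j.val - τ 0 := by rw [hτ0, hja]; ring
      _ = ∑ i ∈ Finset.range j.val, (τ (i+1) - τ i) := (Finset.sum_range_sub τ j.val).symm
      _ = ∑ s ∈ Finset.Ico 1 (j.val+1), (τ s - τ (s-1)) := by
          rw [Finset.sum_Ico_eq_sum_range]
          simp only [Nat.add_sub_cancel]
          apply Finset.sum_congr rfl
          intro i _
          congr 1
          · congr 1; omega
          · congr 1; omega
      _ = ∑ s ∈ Finset.Ico 1 r, (τ s - τ (s-1)) * (if s ≤ j.val then 1 else 0) := by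
          have hfilt : (Finset.Ico 1 r).filter (fun s => s ≤ j.val) = Finset.Ico 1 (j.val+1) := by
            ext s
            simp only [Finset.mem_filter, Finset.mem_Ico]
            have := j.isLt
            omega
          rw [show (∑ s ∈ Finset.Ico 1 r, (τ s - τ (s-1)) * (if s ≤ j.val then (1:ℝ) else 0))
              = ∑ s ∈ Finset.Ico 1 r, (if s ≤ j.val then τ s - τ (s-1) else 0) from
            Finset.sum_congr rfl (fun s _ => by split <;> ring),
            Finset.sum_ite, Finset.sum_const_zero, add_zero, hfilt]
      _ = ∑ s ∈ Finset.Ico 1 r, (τ s - τ (s-1)) * (if τ s ≤ a then 1 else 0) := by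
          apply Finset.sum_congr rfl
          intro s hs; rw [hind s hs]
  refine ⟨r, τ, ?_, ?_⟩
  · intro s hs
    rw [Finset.mem_Ico] at hs
    have h1 : τ (s-1) ≤ τ s := hmono _ _ (by omega) hs.2 (by omega)
    have h2 : τ 0 ≤ τ (s-1) := hmono _ _ hrpos (by omega) (by omega)
    have h3 : ¬ (τ s ≤ τ 0) := by
      rw [hle_iff s 0 hs.2 hrpos]; omega
    constructor
    · rw [← hτ0]; linarith [lt_of_not_ge h3]
    · exact h1
  · intro v hv
    exact hrep (w v) (Finset.mem_insert_of_mem (Finset.mem_image_of_mem w hv))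


lemma sweep {n : ℕ} (d : ℕ) (φ : ℝ) (hφ : 0 ≤ φ) (G : SimpleGraph (Fin n))
    [DecidableRel G.Adj] (C : Finset (Fin n)) (w : Fin n → ℝ) (hw : ∀ v, 0 ≤ w v)
    (hsupp : 2 * (C.filter (fun v => w v ≠ 0)).card ≤ C.card)
    (hexp : ∀ S ⊆ C, S.Nonempty → 2 * S.card ≤ C.card →
      φ * ((d:ℝ) * S.card) ≤ (eCount G S (C \ S) : ℝ)) :
    2 * φ * d * ∑ v ∈ C, w v ≤
      ∑ u ∈ C, ∑ v ∈ C, (if G.Adj u v then |w u - w v| else 0) := by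
  classical
  obtain ⟨r, τ, hτ, hrep⟩ := layercake C w hw
  have hΔ : ∀ s ∈ Finset.Ico 1 r, 0 ≤ τ s - τ (s-1) := fun s hs => by
    linarith [(hτ s hs).2]
  set S : ℕ → Finset (Fin n) := fun s => C.filter (fun v => τ s ≤ w v) with hS
  have hind : ∀ s, ∀ u ∈ C, (if τ s ≤ w u then (1:ℝ) else 0) =
      (if u ∈ S s then (1:ℝ) else 0) := by
    intro s u hu
    simp only [hS, Finset.mem_filter]
    by_cases h : τ s ≤ w u <;> simp [h, hu]
  have key : ∀ u ∈ C, ∀ v ∈ C, |w u - w v| = ∑ s ∈ Finset.Ico 1 r,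
      (τ s - τ (s-1)) * |(if u ∈ S s then (1:ℝ) else 0) - (if v ∈ S s then 1 else 0)| := by
    have main : ∀ u ∈ C, ∀ v ∈ C, w v ≤ w u → |w u - w v| = ∑ s ∈ Finset.Ico 1 r,
        (τ s - τ (s-1)) * |(if u ∈ S s then (1:ℝ) else 0) - (if v ∈ S s then 1 else 0)| := by
      intro u hu v hv hvu
      rw [abs_of_nonneg (by linarith)]
      calc w u - w v
          = ∑ s ∈ Finset.Ico 1 r, (τ s - τ (s-1)) * (if τ s ≤ w u then 1 else 0)
          - ∑ s ∈ Finset.Ico 1 r, (τ s - τ (s-1)) * (if τ s ≤ w v then 1 else 0) := by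
            rw [← hrep u hu, ← hrep v hv]
        _ = ∑ s ∈ Finset.Ico 1 r, (τ s - τ (s-1)) *
              ((if τ s ≤ w u then 1 else 0) - (if τ s ≤ w v then 1 else 0)) := by
            rw [← Finset.sum_sub_distrib]
            exact Finset.sum_congr rfl fun s _ => by ring
        _ = _ := by
            refine Finset.sum_congr rfl fun s hs => ?_
            rw [← hind s u hu, ← hind s v hv]
            congr 1
            rw [abs_of_nonneg]
            by_cases h : τ s ≤ w v
            · simp [h, le_trans h hvu]
            · by_cases h' : τ s ≤ w u <;> simp [h, h']
    intro u hu v hv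
    rcases le_total (w v) (w u) with h | h
    · exact main u hu v hv h
    · rw [abs_sub_comm]
      rw [main v hv u hu h]
      exact Finset.sum_congr rfl fun s _ => by rw [abs_sub_comm]
  have hRHS : (∑ u ∈ C, ∑ v ∈ C, (if G.Adj u v then |w u - w v| else 0)) =
      ∑ s ∈ Finset.Ico 1 r, (τ s - τ (s-1)) *
        ∑ u ∈ C, ∑ v ∈ C, (if G.Adj u v then
          |(if u ∈ S s then (1:ℝ) else 0) - (if v ∈ S s then 1 else 0)| else 0) := by
    have h1 : ∀ u ∈ C, ∀ v ∈ C, (if G.Adj u v then |w u - w v| else 0) =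
        ∑ s ∈ Finset.Ico 1 r, (τ s - τ (s-1)) * (if G.Adj u v then
          |(if u ∈ S s then (1:ℝ) else 0) - (if v ∈ S s then 1 else 0)| else 0) := by
      intro u hu v hv
      by_cases h : G.Adj u v
      · simp only [if_pos h]; exact key u hu v hv
      · simp [h]
    rw [Finset.sum_congr rfl fun u hu => Finset.sum_congr rfl fun v hv => h1 u hu v hv]
    rw [Finset.sum_congr rfl fun u (_ : u ∈ C) => Finset.sum_comm]
    rw [Finset.sum_comm]
    refine Finset.sum_congr rfl fun s _ => ?_
    rw [Finset.mul_sum]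
    exact Finset.sum_congr rfl fun u _ => (Finset.mul_sum _ _ _).symm
  have hlevel : ∀ s ∈ Finset.Ico 1 r, 2 * φ * d * ((S s).card : ℝ) ≤
      ∑ u ∈ C, ∑ v ∈ C, (if G.Adj u v then
        |(if u ∈ S s then (1:ℝ) else 0) - (if v ∈ S s then 1 else 0)| else 0) := by
    intro s hs
    set F : Fin n → Fin n → ℝ := fun u v => (if G.Adj u v then
        |(if u ∈ S s then (1:ℝ) else 0) - (if v ∈ S s then 1 else 0)| else 0) with hF
    by_cases hSne : (S s).Nonempty
    · have hSsubC : S s ⊆ C := Finset.filter_subset _ _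
      have hSsupp : S s ⊆ C.filter (fun v => w v ≠ 0) := by
        intro v hv
        rw [hS, Finset.mem_filter] at hv
        exact Finset.mem_filter.2 ⟨hv.1, by
          have := (hτ s hs).1; intro h0; rw [h0] at hv; linarith [hv.2]⟩
      have hcard : 2 * (S s).card ≤ C.card :=
        le_trans (by have := Finset.card_le_card hSsupp; omega) hsupp
      have hcut := hexp (S s) hSsubC hSne hcard
      have e1 : ∀ u ∈ C \ S s, ∀ v ∈ C \ S s, F u v = 0 := by
        intro u hu v hv
        rw [hF]
        simp only [if_neg (Finset.mem_sdiff.1 hu).2, if_neg (Finset.mem_sdiff.1 hv).2]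
        simp
      have e2 : ∀ u ∈ S s, ∀ v ∈ S s, F u v = 0 := by
        intro u hu v hv
        rw [hF]
        simp only [if_pos hu, if_pos hv]
        simp
      have e3 : ∀ u ∈ S s, ∀ v ∈ C \ S s, F u v = (if G.Adj u v then (1:ℝ) else 0) := by
        intro u hu v hv
        rw [hF]
        simp only [if_pos hu, if_neg (Finset.mem_sdiff.1 hv).2]
        split <;> simp
      have e4 : ∀ u ∈ C \ S s, ∀ v ∈ S s, F u v = (if G.Adj u v then (1:ℝ) else 0) := by
        intro u hu v hv
        rw [hF]
        simp only [if_neg (Finset.mem_sdiff.1 hu).2, if_pos hv]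
        split <;> simp
      have hsplit : (∑ u ∈ C, ∑ v ∈ C, F u v) =
          (eCount G (S s) (C \ S s) : ℝ) + (eCount G (C \ S s) (S s) : ℝ) := by
        calc ∑ u ∈ C, ∑ v ∈ C, F u v
            = (∑ u ∈ C \ S s, ∑ v ∈ C, F u v) + ∑ u ∈ S s, ∑ v ∈ C, F u v :=
              (Finset.sum_sdiff hSsubC).symm
          _ = ((∑ u ∈ C \ S s, ∑ v ∈ C \ S s, F u v) + ∑ u ∈ C \ S s, ∑ v ∈ S s, F u v)
              + ((∑ u ∈ S s, ∑ v ∈ C \ S s, F u v) + ∑ u ∈ S s, ∑ v ∈ S s, F u v) := by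
              rw [Finset.sum_congr rfl fun u (_ : u ∈ C \ S s) => (Finset.sum_sdiff hSsubC).symm,
                Finset.sum_congr rfl fun u (_ : u ∈ S s) => (Finset.sum_sdiff hSsubC).symm,
                Finset.sum_add_distrib, Finset.sum_add_distrib]
          _ = (∑ u ∈ C \ S s, ∑ v ∈ S s, (if G.Adj u v then (1:ℝ) else 0))
              + (∑ u ∈ S s, ∑ v ∈ C \ S s, (if G.Adj u v then (1:ℝ) else 0)) := by
              rw [Finset.sum_congr rfl fun u hu => Finset.sum_congr rfl fun v hv => e1 u hu v hv,
                Finset.sum_congr rfl fun u hu => Finset.sum_congr rfl fun v hv => e4 u hu v hv,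
                Finset.sum_congr rfl fun u hu => Finset.sum_congr rfl fun v hv => e3 u hu v hv,
                Finset.sum_congr rfl fun u hu => Finset.sum_congr rfl fun v hv => e2 u hu v hv]
              simp only [Finset.sum_const_zero, add_zero, zero_add]
          _ = (eCount G (C \ S s) (S s) : ℝ) + (eCount G (S s) (C \ S s) : ℝ) := by
              rw [eCount, eCount]
              push_cast
              rfl
          _ = _ := by ring
      rw [hsplit, eCount_comm G (C \ S s) (S s)]
      have h2 : 2 * φ * (d:ℝ) * ((S s).card : ℝ) = 2 * (φ * ((d:ℝ) * (S s).card)) := by ring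
      rw [h2]
      push_cast
      push_cast at hcut
      linarith
    · rw [Finset.not_nonempty_iff_eq_empty.1 hSne]
      simp only [Finset.card_empty, Nat.cast_zero, mul_zero]
      apply Finset.sum_nonneg
      intro u _
      apply Finset.sum_nonneg
      intro v _
      split
      · exact abs_nonneg _
      · exact le_refl 0
  have hLHS : ∑ v ∈ C, w v = ∑ s ∈ Finset.Ico 1 r, (τ s - τ (s-1)) * ((S s).card : ℝ) := by
    rw [Finset.sum_congr rfl hrep, Finset.sum_comm]
    refine Finset.sum_congr rfl fun s _ => ?_
    rw [← Finset.mul_sum]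
    congr 1
    rw [Finset.sum_boole]
  calc 2 * φ * d * ∑ v ∈ C, w v
      = ∑ s ∈ Finset.Ico 1 r, (τ s - τ (s-1)) * (2 * φ * d * ((S s).card : ℝ)) := by
        rw [hLHS, Finset.mul_sum]
        exact Finset.sum_congr rfl fun s _ => by ring
    _ ≤ ∑ s ∈ Finset.Ico 1 r, (τ s - τ (s-1)) *
        ∑ u ∈ C, ∑ v ∈ C, (if G.Adj u v then
          |(if u ∈ S s then (1:ℝ) else 0) - (if v ∈ S s then 1 else 0)| else 0) := by
        refine Finset.sum_le_sum fun s hs => ?_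
        exact mul_le_mul_of_nonneg_left (hlevel s hs) (hΔ s hs)
    _ = _ := hRHS.symm

lemma cheeger_nonneg {n : ℕ} (d : ℕ) (φ : ℝ) (hφ : 0 ≤ φ) (G : SimpleGraph (Fin n))
    [DecidableRel G.Adj] (C : Finset (Fin n))
    (hdeg : ∀ u, (∑ v ∈ C, (if G.Adj u v then (1:ℝ) else 0)) ≤ d)
    (z : Fin n → ℝ) (hz : ∀ v, 0 ≤ z v)
    (hsupp : 2 * (C.filter (fun v => z v ≠ 0)).card ≤ C.card)
    (hexp : ∀ S ⊆ C, S.Nonempty → 2 * S.card ≤ C.card →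
      φ * ((d:ℝ) * S.card) ≤ (eCount G S (C \ S) : ℝ)) :
    φ^2 * d * ∑ v ∈ C, (z v)^2 ≤
      ∑ u ∈ C, ∑ v ∈ C, (if G.Adj u v then (z u - z v)^2 else 0) := by
  classical
  set w : Fin n → ℝ := fun v => (z v)^2 with hwdef
  have hw : ∀ v, 0 ≤ w v := fun v => sq_nonneg _
  have hsupp' : 2 * (C.filter (fun v => w v ≠ 0)).card ≤ C.card := by
    have : C.filter (fun v => w v ≠ 0) = C.filter (fun v => z v ≠ 0) := by
      apply Finset.filter_congr
      intro v _
      simp [hwdef, pow_eq_zero_iff]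
    rwa [this]
  have hsweep := sweep d φ hφ G C w hw hsupp' hexp
  set W : ℝ := ∑ v ∈ C, w v with hW
  have hWnn : 0 ≤ W := Finset.sum_nonneg fun v _ => hw v
  set Q : ℝ := ∑ u ∈ C, ∑ v ∈ C, (if G.Adj u v then (z u - z v)^2 else 0) with hQ
  have hQnn : 0 ≤ Q := Finset.sum_nonneg fun u _ => Finset.sum_nonneg fun v _ => by
    split
    · exact sq_nonneg _
    · exact le_refl 0
  set M : ℝ := ∑ u ∈ C, ∑ v ∈ C, (if G.Adj u v then (z u + z v)^2 else 0) with hM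
  set N : ℝ := ∑ u ∈ C, ∑ v ∈ C, (if G.Adj u v then |w u - w v| else 0) with hN
  -- Cauchy-Schwarz : N^2 ≤ Q * M
  have hCS : N^2 ≤ Q * M := by
    have h1 : N = ∑ p ∈ C ×ˢ C, ((if G.Adj p.1 p.2 then |z p.1 - z p.2| else 0) *
        (if G.Adj p.1 p.2 then (z p.1 + z p.2) else 0)) := by
      rw [hN, Finset.sum_product]
      refine Finset.sum_congr rfl fun u _ => Finset.sum_congr rfl fun v _ => ?_
      by_cases h : G.Adj u v
      · simp only [if_pos h, hwdef]
        rw [show (z u)^2 - (z v)^2 = (z u - z v) * (z u + z v) by ring, abs_mul,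
          abs_of_nonneg (by have := hz u; have := hz v; linarith : (0:ℝ) ≤ z u + z v)]
      · simp [h]
    have h2 : Q = ∑ p ∈ C ×ˢ C, (if G.Adj p.1 p.2 then |z p.1 - z p.2| else 0)^2 := by
      rw [hQ, Finset.sum_product]
      refine Finset.sum_congr rfl fun u _ => Finset.sum_congr rfl fun v _ => ?_
      by_cases h : G.Adj u v <;> simp [h, sq_abs]
    have h3 : M = ∑ p ∈ C ×ˢ C, (if G.Adj p.1 p.2 then (z p.1 + z p.2) else 0)^2 := by
      rw [hM, Finset.sum_product]
      refine Finset.sum_congr rfl fun u _ => Finset.sum_congr rfl fun v _ => ?_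
      by_cases h : G.Adj u v <;> simp [h]
    rw [h1, h2, h3]
    exact Finset.sum_mul_sq_le_sq_mul_sq _ _ _
  -- M ≤ 4 d W
  have hM4 : M ≤ 4 * d * W := by
    have step1 : M ≤ ∑ u ∈ C, ∑ v ∈ C, (if G.Adj u v then 2*(z u)^2 + 2*(z v)^2 else 0) := by
      refine Finset.sum_le_sum fun u _ => Finset.sum_le_sum fun v _ => ?_
      split
      · nlinarith [sq_nonneg (z u - z v)]
      · exact le_refl 0
    have split2 : ∀ u v, (if G.Adj u v then 2*(z u)^2 + 2*(z v)^2 else (0:ℝ)) =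
        2*(z u)^2 * (if G.Adj u v then 1 else 0) + 2*(z v)^2 * (if G.Adj u v then 1 else 0) := by
      intro u v; split <;> ring
    have step2 : (∑ u ∈ C, ∑ v ∈ C, (if G.Adj u v then 2*(z u)^2 + 2*(z v)^2 else (0:ℝ)))
        = (∑ u ∈ C, 2*(z u)^2 * ∑ v ∈ C, (if G.Adj u v then (1:ℝ) else 0))
        + (∑ v ∈ C, 2*(z v)^2 * ∑ u ∈ C, (if G.Adj u v then (1:ℝ) else 0)) := by
      rw [Finset.sum_congr rfl fun u (_ : u ∈ C) =>
        Finset.sum_congr rfl fun v (_ : v ∈ C) => split2 u v]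
      rw [Finset.sum_congr rfl fun u (_ : u ∈ C) => Finset.sum_add_distrib,
        Finset.sum_add_distrib]
      congr 1
      · exact Finset.sum_congr rfl fun u _ => (Finset.mul_sum _ _ _).symm
      · rw [Finset.sum_comm]
        exact Finset.sum_congr rfl fun v _ => (Finset.mul_sum _ _ _).symm
    have hdeg' : ∀ v, (∑ u ∈ C, (if G.Adj u v then (1:ℝ) else 0)) ≤ d := by
      intro v
      have := hdeg v
      calc (∑ u ∈ C, (if G.Adj u v then (1:ℝ) else 0))
          = ∑ u ∈ C, (if G.Adj v u then (1:ℝ) else 0) :=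
            Finset.sum_congr rfl fun u _ => if_congr (G.adj_comm u v) rfl rfl
        _ ≤ d := hdeg v
    have step3 : (∑ u ∈ C, 2*(z u)^2 * ∑ v ∈ C, (if G.Adj u v then (1:ℝ) else 0)) ≤ 2 * d * W := by
      rw [hW, hwdef, Finset.mul_sum]
      refine Finset.sum_le_sum fun u _ => ?_
      have h1 : 0 ≤ 2*(z u)^2 := by positivity
      calc 2*(z u)^2 * ∑ v ∈ C, (if G.Adj u v then (1:ℝ) else 0)
          ≤ 2*(z u)^2 * d := mul_le_mul_of_nonneg_left (hdeg u) h1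
        _ = 2 * d * (z u)^2 := by ring
    have step4 : (∑ v ∈ C, 2*(z v)^2 * ∑ u ∈ C, (if G.Adj u v then (1:ℝ) else 0)) ≤ 2 * d * W := by
      rw [hW, hwdef, Finset.mul_sum]
      refine Finset.sum_le_sum fun v _ => ?_
      have h1 : 0 ≤ 2*(z v)^2 := by positivity
      calc 2*(z v)^2 * ∑ u ∈ C, (if G.Adj u v then (1:ℝ) else 0)
          ≤ 2*(z v)^2 * d := mul_le_mul_of_nonneg_left (hdeg' v) h1
        _ = 2 * d * (z v)^2 := by ring
    calc M ≤ _ := step1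
      _ = _ := step2
      _ ≤ 2*d*W + 2*d*W := add_le_add step3 step4
      _ = 4*d*W := by ring
  -- combine
  by_cases hWz : W = 0
  · rw [hWz, mul_zero]; exact hQnn
  · have hWpos : 0 < W := lt_of_le_of_ne hWnn (Ne.symm hWz)
    have hNnn : 0 ≤ N := by linarith [hsweep, mul_nonneg (mul_nonneg (by positivity : (0:ℝ) ≤ 2*φ) (Nat.cast_nonneg d)) hWnn]
    have h2φ : 0 ≤ 2 * φ * (d:ℝ) * W :=
      mul_nonneg (mul_nonneg (mul_nonneg (by norm_num) hφ) (Nat.cast_nonneg d)) hWnn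
    have h1 : (2 * φ * d * W)^2 ≤ N^2 := sq_le_sq' (by linarith) hsweep
    have h2 : N^2 ≤ Q * (4 * d * W) := le_trans hCS (mul_le_mul_of_nonneg_left hM4 hQnn)
    nlinarith [h1, h2, hWpos, hQnn]

lemma cheeger_cluster {n : ℕ} (d : ℕ) (φ : ℝ) (hφ : 0 ≤ φ) (G : SimpleGraph (Fin n))
    [DecidableRel G.Adj] (C : Finset (Fin n)) (hCne : C.Nonempty)
    (hdeg : ∀ u, (∑ v ∈ C, (if G.Adj u v then (1:ℝ) else 0)) ≤ d)
    (hexp : ∀ S ⊆ C, S.Nonempty → 2 * S.card ≤ C.card →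
      φ * ((d:ℝ) * S.card) ≤ (eCount G S (C \ S) : ℝ))
    (x : Fin n → ℝ) (hx : ∑ v ∈ C, x v = 0) :
    φ^2 * d * ∑ v ∈ C, (x v)^2 ≤
      ∑ u ∈ C, ∑ v ∈ C, (if G.Adj u v then (x u - x v)^2 else 0) := by
  classical
  -- find a median μ
  obtain ⟨μ, hμ1, hμ2⟩ : ∃ μ : ℝ, 2 * (C.filter (fun v => μ < x v)).card ≤ C.card ∧
      2 * (C.filter (fun v => x v < μ)).card ≤ C.card := by
    set T : Finset ℝ := (C.image x).filter
      (fun t => C.card ≤ 2 * (C.filter (fun v => x v ≤ t)).card) with hT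
    have hMmem : (C.image x).max' (hCne.image x) ∈ T := by
      rw [hT, Finset.mem_filter]
      refine ⟨Finset.max'_mem _ _, ?_⟩
      have : C.filter (fun v => x v ≤ (C.image x).max' (hCne.image x)) = C := by
        apply Finset.filter_true_of_mem
        intro v hv
        exact Finset.le_max' _ _ (Finset.mem_image_of_mem x hv)
      rw [this]
      omega
    have hTne : T.Nonempty := ⟨_, hMmem⟩
    refine ⟨T.min' hTne, ?_, ?_⟩
    · have h3 := (Finset.mem_filter.1 (T.min'_mem hTne)).2
      have h1 := Finset.card_filter_add_card_filter_not (s := C)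
        (p := fun v => x v ≤ T.min' hTne)
      have h2 : C.filter (fun v => ¬ x v ≤ T.min' hTne) = C.filter (fun v => T.min' hTne < x v) := by
        apply Finset.filter_congr
        intro v _
        exact not_le
      rw [h2] at h1
      omega
    · set D := C.filter (fun v => x v < T.min' hTne) with hD
      by_cases hDne : D.Nonempty
      · set t : ℝ := (D.image x).max' (hDne.image x) with ht
        have htmem : t ∈ D.image x := Finset.max'_mem _ _
        obtain ⟨v0, hv0D, hv0⟩ := Finset.mem_image.1 htmem
        rw [hD] at hv0D
        have htlt : t < T.min' hTne := by
          rw [← hv0]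
          exact (Finset.mem_filter.1 hv0D).2
        have htimage : t ∈ C.image x := by
          rw [← hv0]
          exact Finset.mem_image_of_mem x (Finset.mem_filter.1 hv0D).1
        have htnotT : t ∉ T := fun h => absurd (T.min'_le _ h) (not_le.2 htlt)
        have htcard : ¬ (C.card ≤ 2 * (C.filter (fun v => x v ≤ t)).card) := by
          intro h
          exact htnotT (by rw [hT, Finset.mem_filter]; exact ⟨htimage, h⟩)
        have hDsub : D ⊆ C.filter (fun v => x v ≤ t) := by
          intro v hv
          rw [Finset.mem_filter]
          refine ⟨(Finset.mem_filter.1 (hD ▸ hv : v ∈ C.filter (fun v => x v < T.min' hTne))).1, ?_⟩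
          exact Finset.le_max' _ _ (Finset.mem_image_of_mem x hv)
        have := Finset.card_le_card hDsub
        omega
      · rw [Finset.not_nonempty_iff_eq_empty] at hDne
        rw [hDne]
        simp
  -- recenter
  set y : Fin n → ℝ := fun v => x v - μ with hy
  have hyQ : (∑ u ∈ C, ∑ v ∈ C, (if G.Adj u v then (x u - x v)^2 else 0)) =
      ∑ u ∈ C, ∑ v ∈ C, (if G.Adj u v then (y u - y v)^2 else 0) := by
    refine Finset.sum_congr rfl fun u _ => Finset.sum_congr rfl fun v _ => ?_
    simp only [hy]
    split
    · ring_nf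
    · rfl
  have hynorm : (∑ v ∈ C, (x v)^2) ≤ ∑ v ∈ C, (y v)^2 := by
    have : (∑ v ∈ C, (y v)^2) = (∑ v ∈ C, (x v)^2) - 2*μ*(∑ v ∈ C, x v) + μ^2 * C.card := by
      simp only [hy]
      rw [Finset.sum_congr rfl fun v (_ : v ∈ C) => (by ring :
        (x v - μ)^2 = (x v)^2 - 2*μ*(x v) + μ^2)]
      rw [Finset.sum_add_distrib, Finset.sum_sub_distrib, ← Finset.mul_sum,
        Finset.sum_const, nsmul_eq_mul]
      ring
    rw [this, hx]
    have : (0:ℝ) ≤ μ^2 * C.card := by positivity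
    linarith
  -- positive and negative parts
  set p : Fin n → ℝ := fun v => max (y v) 0 with hp
  set q : Fin n → ℝ := fun v => max (-(y v)) 0 with hq
  have hpnn : ∀ v, 0 ≤ p v := fun v => le_max_right _ _
  have hqnn : ∀ v, 0 ≤ q v := fun v => le_max_right _ _
  have hy2 : ∀ v, (y v)^2 = (p v)^2 + (q v)^2 := by
    intro v
    simp only [hp, hq]
    rcases le_total 0 (y v) with h | h
    · rw [max_eq_left h, max_eq_right (by linarith)]; ring
    · rw [max_eq_right h, max_eq_left (by linarith)]; ring
  have hpsupp : 2 * (C.filter (fun v => p v ≠ 0)).card ≤ C.card := by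
    have : C.filter (fun v => p v ≠ 0) = C.filter (fun v => μ < x v) := by
      apply Finset.filter_congr
      intro v _
      simp only [hp, hy]
      constructor
      · intro h
        rcases lt_or_ge μ (x v) with h' | h'
        · exact h'
        · exact absurd (max_eq_right (by linarith)) h
      · intro h
        rw [max_eq_left (by linarith)]
        intro h0
        linarith
    rw [this]; exact hμ1
  have hqsupp : 2 * (C.filter (fun v => q v ≠ 0)).card ≤ C.card := by
    have : C.filter (fun v => q v ≠ 0) = C.filter (fun v => x v < μ) := by
      apply Finset.filter_congr
      intro v _
      simp only [hq, hy]
      constructor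
      · intro h
        by_contra h'
        rw [not_lt] at h'
        exact h (max_eq_right (by linarith))
      · intro h
        rw [max_eq_left (by linarith)]
        intro h0
        linarith
    rw [this]; exact hμ2
  have hpq : ∀ u v : Fin n, (p u - p v)^2 + (q u - q v)^2 ≤ (y u - y v)^2 := by
    intro u v
    simp only [hp, hq]
    rcases le_total 0 (y u) with hu | hu <;> rcases le_total 0 (y v) with hv | hv
    · rw [max_eq_left hu, max_eq_left hv, max_eq_right (by linarith), max_eq_right (by linarith)]
      nlinarith
    · rw [max_eq_left hu, max_eq_right hv, max_eq_right (by linarith), max_eq_left (by linarith)]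
      nlinarith
    · rw [max_eq_right hu, max_eq_left hv, max_eq_left (by linarith), max_eq_right (by linarith)]
      nlinarith
    · rw [max_eq_right hu, max_eq_right hv, max_eq_left (by linarith), max_eq_left (by linarith)]
      nlinarith
  have hP := cheeger_nonneg d φ hφ G C hdeg p hpnn hpsupp hexp
  have hQ := cheeger_nonneg d φ hφ G C hdeg q hqnn hqsupp hexp
  have hsum : (∑ u ∈ C, ∑ v ∈ C, (if G.Adj u v then (p u - p v)^2 else 0))
      + (∑ u ∈ C, ∑ v ∈ C, (if G.Adj u v then (q u - q v)^2 else 0))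
      ≤ ∑ u ∈ C, ∑ v ∈ C, (if G.Adj u v then (y u - y v)^2 else 0) := by
    rw [← Finset.sum_add_distrib]
    refine Finset.sum_le_sum fun u _ => ?_
    rw [← Finset.sum_add_distrib]
    refine Finset.sum_le_sum fun v _ => ?_
    split
    · exact hpq u v
    · norm_num
  have hyexp : (∑ v ∈ C, (y v)^2) = (∑ v ∈ C, (p v)^2) + ∑ v ∈ C, (q v)^2 := by
    rw [← Finset.sum_add_distrib]
    exact Finset.sum_congr rfl fun v _ => hy2 v
  have hd0 : (0:ℝ) ≤ (d:ℝ) := Nat.cast_nonneg d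
  calc φ^2 * d * ∑ v ∈ C, (x v)^2
      ≤ φ^2 * d * ∑ v ∈ C, (y v)^2 := by
        apply mul_le_mul_of_nonneg_left hynorm (by positivity)
    _ = φ^2 * d * (∑ v ∈ C, (p v)^2) + φ^2 * d * (∑ v ∈ C, (q v)^2) := by
        rw [hyexp]; ring
    _ ≤ (∑ u ∈ C, ∑ v ∈ C, (if G.Adj u v then (p u - p v)^2 else 0))
      + (∑ u ∈ C, ∑ v ∈ C, (if G.Adj u v then (q u - q v)^2 else 0)) := add_le_add hP hQ
    _ ≤ ∑ u ∈ C, ∑ v ∈ C, (if G.Adj u v then (y u - y v)^2 else 0) := hsum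
    _ = _ := hyQ.symm

/-- Let `G` be a `d`-regular graph on `n` vertices admitting a
`(k,φ,ε)`-clustering.  If the normalized Laplacian `L_G = I − A_G/d` has
orthonormal eigendecomposition `L_G = U (diagonal lam) Uᵀ` with `lam` sorted
nondecreasingly, then the `k`-th smallest eigenvalue satisfies `λ_k ≤ 2ε`
(0-indexed: `lam ⟨k−1,_⟩`) and the `(k+1)`-st satisfies `λ_{k+1} ≥ φ²/2`
(0-indexed: `lam ⟨k,_⟩`). -/
theorem stmt18 (n k d : ℕ) (hk : 0 < k) (hkn : k < n) (hd : 0 < d)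
    (φ ε : ℝ) (hφ : 0 < φ) (hφ1 : φ ≤ 1) (hε : 0 ≤ ε)
    (G : SimpleGraph (Fin n)) [DecidableRel G.Adj] (hreg : G.IsRegularOfDegree d)
    (C : Fin k → Finset (Fin n))
    (hpart : ∀ v : Fin n, ∃! i, v ∈ C i)
    (hCne : ∀ i, (C i).Nonempty)
    (hinner : ∀ i, ∀ S ⊆ C i, S.Nonempty → 2 * S.card ≤ (C i).card →
      φ * ((d : ℝ) * S.card) ≤ (eCount G S (C i \ S) : ℝ))
    (houter : ∀ i, (eCount G (C i) (C i)ᶜ : ℝ) ≤ ε * ((d : ℝ) * (C i).card))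
    (U : Matrix (Fin n) (Fin n) ℝ) (hU : U ∈ Matrix.orthogonalGroup (Fin n) ℝ)
    (lam : Fin n → ℝ) (hmono : Monotone lam)
    (hdecomp : (1 : Matrix (Fin n) (Fin n) ℝ) - (d : ℝ)⁻¹ • G.adjMatrix ℝ =
      U * Matrix.diagonal lam * Uᵀ) :
    lam ⟨k - 1, by omega⟩ ≤ 2 * ε ∧ φ ^ 2 / 2 ≤ lam ⟨k, hkn⟩ := by
  classical
  have hd0 : (0:ℝ) < (d:ℝ) := by exact_mod_cast hd
  -- orthogonality facts
  have hstar : star U = Uᵀ := by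
    simp [Matrix.star_eq_conjTranspose, Matrix.conjTranspose_eq_transpose_of_trivial]
  have hUtU : Uᵀ * U = 1 := by
    rw [← hstar]; exact (Matrix.mem_orthogonalGroup_iff' _ _).1 hU
  have hUUt : U * Uᵀ = 1 := by
    rw [← hstar]; exact (Matrix.mem_orthogonalGroup_iff _ _).1 hU
  -- degrees
  have hdeg : ∀ u, (∑ v : Fin n, if G.Adj u v then (1:ℝ) else 0) = d := by
    intro u
    rw [Finset.sum_boole]
    have : (Finset.univ.filter (fun w => G.Adj u w)) = G.neighborFinset u :=
      (SimpleGraph.neighborFinset_eq_filter G).symm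
    rw [this]
    exact_mod_cast congrArg Nat.cast (hreg u)
  -- quadratic form identity
  have hquad : ∀ x : Fin n → ℝ,
      x ⬝ᵥ (((1 : Matrix (Fin n) (Fin n) ℝ) - (d:ℝ)⁻¹ • G.adjMatrix ℝ) *ᵥ x) =
      (2*(d:ℝ))⁻¹ * ∑ u : Fin n, ∑ v : Fin n, (if G.Adj u v then (x u - x v)^2 else 0) := by
    intro x
    have expand : ∀ u v : Fin n, (if G.Adj u v then (x u - x v)^2 else (0:ℝ)) =
        (if G.Adj u v then (1:ℝ) else 0) * (x u)^2 + (if G.Adj u v then (1:ℝ) else 0) * (x v)^2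
        - 2 * ((if G.Adj u v then (1:ℝ) else 0) * (x u * x v)) := by
      intro u v; split <;> ring
    have hsum1 : (∑ u : Fin n, ∑ v : Fin n, (if G.Adj u v then (1:ℝ) else 0) * (x u)^2)
        = d * ∑ u : Fin n, (x u)^2 := by
      rw [Finset.mul_sum]
      refine Finset.sum_congr rfl fun u _ => ?_
      rw [show (∑ v : Fin n, (if G.Adj u v then (1:ℝ) else 0) * (x u)^2)
        = (∑ v : Fin n, (if G.Adj u v then (1:ℝ) else 0)) * (x u)^2 from
        (Finset.sum_mul _ _ _).symm, hdeg u]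
    have hsum2 : (∑ u : Fin n, ∑ v : Fin n, (if G.Adj u v then (1:ℝ) else 0) * (x v)^2)
        = d * ∑ u : Fin n, (x u)^2 := by
      rw [Finset.sum_comm]
      rw [Finset.mul_sum]
      refine Finset.sum_congr rfl fun v _ => ?_
      rw [show (∑ u : Fin n, (if G.Adj u v then (1:ℝ) else 0) * (x v)^2)
        = (∑ u : Fin n, (if G.Adj u v then (1:ℝ) else 0)) * (x v)^2 from
        (Finset.sum_mul _ _ _).symm]
      rw [show (∑ u : Fin n, (if G.Adj u v then (1:ℝ) else 0))
        = (∑ u : Fin n, (if G.Adj v u then (1:ℝ) else 0)) from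
        Finset.sum_congr rfl fun u _ => if_congr (G.adj_comm u v) rfl rfl, hdeg v]
    have hRHS : (∑ u : Fin n, ∑ v : Fin n, (if G.Adj u v then (x u - x v)^2 else 0))
        = 2 * d * (∑ u : Fin n, (x u)^2)
          - 2 * ∑ u : Fin n, ∑ v : Fin n, ((if G.Adj u v then (1:ℝ) else 0) * (x u * x v)) := by
      rw [Finset.sum_congr rfl fun u (_ : u ∈ Finset.univ) =>
        Finset.sum_congr rfl fun v (_ : v ∈ Finset.univ) => expand u v]
      rw [Finset.sum_congr rfl fun u (_ : u ∈ Finset.univ) => Finset.sum_sub_distrib _ _,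
        Finset.sum_sub_distrib]
      rw [Finset.sum_congr rfl fun u (_ : u ∈ Finset.univ) => Finset.sum_add_distrib,
        Finset.sum_add_distrib]
      have pull : (∑ u : Fin n, ∑ v : Fin n, 2 * ((if G.Adj u v then (1:ℝ) else 0) * (x u * x v)))
          = 2 * ∑ u : Fin n, ∑ v : Fin n, ((if G.Adj u v then (1:ℝ) else 0) * (x u * x v)) := by
        rw [Finset.mul_sum]
        exact Finset.sum_congr rfl fun u _ => (Finset.mul_sum _ _ _).symm
      rw [hsum1, hsum2, pull]
      ring
    have hIP : ∀ M : Matrix (Fin n) (Fin n) ℝ,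
        x ⬝ᵥ (M *ᵥ x) = ∑ u : Fin n, ∑ v : Fin n, M u v * (x u * x v) := by
      intro M
      simp only [dotProduct, Matrix.mulVec]
      refine Finset.sum_congr rfl fun u _ => ?_
      rw [Finset.mul_sum]
      exact Finset.sum_congr rfl fun v _ => by ring
    have hL : ∀ u v : Fin n, ((1 : Matrix (Fin n) (Fin n) ℝ) - (d:ℝ)⁻¹ • G.adjMatrix ℝ) u v
        = (if u = v then 1 else 0) - (d:ℝ)⁻¹ * (if G.Adj u v then 1 else 0) := by
      intro u v
      simp [Matrix.sub_apply, Matrix.one_apply, Matrix.smul_apply, SimpleGraph.adjMatrix_apply]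
    have hLHS : x ⬝ᵥ (((1 : Matrix (Fin n) (Fin n) ℝ) - (d:ℝ)⁻¹ • G.adjMatrix ℝ) *ᵥ x)
        = (∑ u : Fin n, (x u)^2)
          - (d:ℝ)⁻¹ * ∑ u : Fin n, ∑ v : Fin n, ((if G.Adj u v then (1:ℝ) else 0) * (x u * x v)) := by
      rw [hIP]
      rw [Finset.sum_congr rfl fun u (_ : u ∈ Finset.univ) =>
        Finset.sum_congr rfl fun v (_ : v ∈ Finset.univ) => by rw [hL u v]]
      have expand2 : ∀ u v : Fin n,
          ((if u = v then (1:ℝ) else 0) - (d:ℝ)⁻¹ * (if G.Adj u v then 1 else 0)) * (x u * x v)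
          = (if u = v then (1:ℝ) else 0) * (x u * x v)
            - (d:ℝ)⁻¹ * ((if G.Adj u v then (1:ℝ) else 0) * (x u * x v)) := by
        intro u v; ring
      rw [Finset.sum_congr rfl fun u (_ : u ∈ Finset.univ) =>
        Finset.sum_congr rfl fun v (_ : v ∈ Finset.univ) => expand2 u v]
      rw [Finset.sum_congr rfl fun u (_ : u ∈ Finset.univ) => Finset.sum_sub_distrib _ _,
        Finset.sum_sub_distrib]
      congr 1
      · refine Finset.sum_congr rfl fun u _ => ?_
        rw [Finset.sum_congr rfl fun v (_ : v ∈ Finset.univ) =>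
          boole_mul (u = v) (x u * x v)]
        rw [Finset.sum_ite_eq Finset.univ u (fun v => x u * x v)]
        simp [pow_two]
      · rw [Finset.mul_sum]
        exact Finset.sum_congr rfl fun u _ => (Finset.mul_sum _ _ _).symm
    rw [hLHS, hRHS]
    field_simp
  -- spectral identity
  have hspec : ∀ x : Fin n → ℝ,
      x ⬝ᵥ (((1 : Matrix (Fin n) (Fin n) ℝ) - (d:ℝ)⁻¹ • G.adjMatrix ℝ) *ᵥ x)
      = ∑ j : Fin n, lam j * ((Uᵀ *ᵥ x) j)^2 := by
    intro x
    rw [hdecomp, ← Matrix.mulVec_mulVec, ← Matrix.mulVec_mulVec]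
    rw [Matrix.dotProduct_mulVec]
    rw [show x ᵥ* U = Uᵀ *ᵥ x from by rw [← Matrix.transpose_transpose U, Matrix.vecMul_transpose, Matrix.transpose_transpose]]
    rw [dotProduct]
    refine Finset.sum_congr rfl fun j _ => ?_
    rw [Matrix.mulVec_diagonal]
    ring
  have hnorm : ∀ x : Fin n → ℝ, (∑ j : Fin n, ((Uᵀ *ᵥ x) j)^2) = ∑ v : Fin n, (x v)^2 := by
    intro x
    have h1 : (Uᵀ *ᵥ x) ⬝ᵥ (Uᵀ *ᵥ x) = x ⬝ᵥ x := by
      rw [Matrix.dotProduct_mulVec, Matrix.vecMul_transpose, Matrix.mulVec_mulVec, hUUt,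
        Matrix.one_mulVec]
    calc (∑ j : Fin n, ((Uᵀ *ᵥ x) j)^2) = (Uᵀ *ᵥ x) ⬝ᵥ (Uᵀ *ᵥ x) :=
        Finset.sum_congr rfl fun j _ => (pow_two _)
      _ = x ⬝ᵥ x := h1
      _ = ∑ v : Fin n, (x v)^2 := Finset.sum_congr rfl fun v _ => (pow_two _).symm
  -- partition infrastructure
  have hclE : ∀ v : Fin n, ∃ i, v ∈ C i := fun v => ⟨(hpart v).choose, (hpart v).choose_spec.1⟩
  set cl : Fin n → Fin k := fun v => (hclE v).choose with hcl
  have hclmem : ∀ v, v ∈ C (cl v) := fun v => (hclE v).choose_spec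
  have hcluniq : ∀ v i, v ∈ C i → cl v = i := by
    intro v i h
    obtain ⟨j, _, hj⟩ := hpart v
    rw [hj _ h, hj _ (hclmem v)]
  have hfilter : ∀ i, Finset.univ.filter (fun v => cl v = i) = C i := by
    intro i
    ext v
    simp only [Finset.mem_filter, Finset.mem_univ, true_and]
    constructor
    · intro h; rw [← h]; exact hclmem v
    · exact hcluniq v i
  have hpartsum : ∀ f : Fin n → ℝ, (∑ v : Fin n, f v) = ∑ i : Fin k, ∑ v ∈ C i, f v := by
    intro f
    rw [← Finset.sum_fiberwise Finset.univ cl f]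
    exact Finset.sum_congr rfl fun i _ => by rw [hfilter]
  have hcompl : ∀ (i : Fin k) (v : Fin n), v ∈ (C i)ᶜ ↔ cl v ≠ i := by
    intro i v
    rw [Finset.mem_compl]
    constructor
    · intro h hc; exact h (hc ▸ hclmem v)
    · intro h hc; exact h (hcluniq v i hc)
  ---------------------------------------------------------------------------
  -- PART 1
  ---------------------------------------------------------------------------
  have part1 : lam ⟨k - 1, by omega⟩ ≤ 2 * ε := by
    set emb1 : Fin (k-1) → Fin n := fun j => ⟨j.val, by omega⟩ with hemb1
    set ψ : (Fin k → ℝ) →ₗ[ℝ] (Fin (k-1) → ℝ) :=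
      (LinearMap.funLeft ℝ ℝ emb1) ∘ₗ (Matrix.mulVecLin Uᵀ) ∘ₗ (LinearMap.funLeft ℝ ℝ cl)
      with hψ
    obtain ⟨c, hcker, hc0⟩ : ∃ c : Fin k → ℝ, ψ c = 0 ∧ c ≠ 0 := by
      have hni : ¬ Function.Injective ψ := by
        intro hinj
        have h1 := LinearMap.finrank_le_finrank_of_injective hinj
        rw [Module.finrank_fintype_fun_eq_card, Module.finrank_fintype_fun_eq_card] at h1
        simp only [Fintype.card_fin] at h1
        omega
      rw [← LinearMap.ker_eq_bot] at hni
      obtain ⟨c, hc1, hc2⟩ := (Submodule.ne_bot_iff _).1 hni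
      exact ⟨c, LinearMap.mem_ker.1 hc1, hc2⟩
    set y : Fin n → ℝ := fun v => c (cl v) with hy
    have ha : ∀ j : Fin n, (j:ℕ) < k-1 → (Uᵀ *ᵥ y) j = 0 := by
      intro j hj
      have h1 : ψ c ⟨j.val, hj⟩ = 0 := by rw [hcker]; rfl
      have h2 : ψ c ⟨j.val, hj⟩ = (Uᵀ *ᵥ y) (emb1 ⟨j.val, hj⟩) := rfl
      have h3 : emb1 ⟨j.val, hj⟩ = j := by rw [hemb1]
      rw [← h3, ← h2, h1]
    have hy2pos : 0 < ∑ v : Fin n, (y v)^2 := by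
      obtain ⟨i, hi⟩ := Function.ne_iff.1 hc0
      obtain ⟨v0, hv0⟩ := hCne i
      refine Finset.sum_pos' (fun v _ => sq_nonneg _) ⟨v0, Finset.mem_univ v0, ?_⟩
      simp only [hy]
      have : cl v0 = i := hcluniq v0 i hv0
      rw [this]
      have : c i ≠ 0 := hi
      positivity
    -- spectral lower bound
    have hlow : lam ⟨k - 1, by omega⟩ * ∑ v : Fin n, (y v)^2 ≤
        y ⬝ᵥ (((1 : Matrix (Fin n) (Fin n) ℝ) - (d:ℝ)⁻¹ • G.adjMatrix ℝ) *ᵥ y) := by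
      rw [hspec y, ← hnorm y, Finset.mul_sum]
      refine Finset.sum_le_sum fun j _ => ?_
      by_cases hj : (j:ℕ) < k-1
      · rw [ha j hj]
        simp
      · have hle : (⟨k-1, by omega⟩ : Fin n) ≤ j := by
          rw [Fin.le_def]
          simpa using Nat.le_of_not_lt hj
        exact mul_le_mul_of_nonneg_right (hmono hle) (sq_nonneg _)
    -- combinatorial upper bound
    have hupp : (∑ u : Fin n, ∑ v : Fin n, (if G.Adj u v then (y u - y v)^2 else 0))
        ≤ 4 * ε * d * ∑ v : Fin n, (y v)^2 := by
      set E1 : ℝ := ∑ u : Fin n, ∑ v : Fin n,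
        (if G.Adj u v ∧ cl u ≠ cl v then (c (cl u))^2 else 0) with hE1
      set E2 : ℝ := ∑ u : Fin n, ∑ v : Fin n,
        (if G.Adj u v ∧ cl u ≠ cl v then (c (cl v))^2 else 0) with hE2
      have step_a : (∑ u : Fin n, ∑ v : Fin n, (if G.Adj u v then (y u - y v)^2 else 0))
          ≤ ∑ u : Fin n, ∑ v : Fin n, ((if G.Adj u v ∧ cl u ≠ cl v then 2*(c (cl u))^2 else 0)
            + (if G.Adj u v ∧ cl u ≠ cl v then 2*(c (cl v))^2 else 0)) := by
        refine Finset.sum_le_sum fun u _ => Finset.sum_le_sum fun v _ => ?_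
        by_cases hadj : G.Adj u v
        · by_cases hne : cl u ≠ cl v
          · rw [if_pos hadj, if_pos ⟨hadj, hne⟩, if_pos ⟨hadj, hne⟩]
            simp only [hy]
            nlinarith [sq_nonneg (c (cl u) + c (cl v))]
          · rw [not_not] at hne
            rw [if_pos hadj, if_neg (fun h => h.2 hne), if_neg (fun h => h.2 hne)]
            simp only [hy]
            rw [hne]
            simp
        · rw [if_neg hadj, if_neg (fun h => hadj h.1), if_neg (fun h => hadj h.1)]
          simp
      have step_b : (∑ u : Fin n, ∑ v : Fin n,
            ((if G.Adj u v ∧ cl u ≠ cl v then 2*(c (cl u))^2 else 0)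
            + (if G.Adj u v ∧ cl u ≠ cl v then 2*(c (cl v))^2 else 0)))
          = 2 * E1 + 2 * E2 := by
        rw [Finset.sum_congr rfl fun u (_ : u ∈ Finset.univ) => Finset.sum_add_distrib,
          Finset.sum_add_distrib, hE1, hE2, Finset.mul_sum, Finset.mul_sum]
        congr 1
        · refine Finset.sum_congr rfl fun u _ => ?_
          rw [Finset.mul_sum]
          refine Finset.sum_congr rfl fun v _ => ?_
          split <;> ring
        · refine Finset.sum_congr rfl fun u _ => ?_
          rw [Finset.mul_sum]
          refine Finset.sum_congr rfl fun v _ => ?_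
          split <;> ring
      have step_c : E2 = E1 := by
        rw [hE1, hE2, Finset.sum_comm]
        refine Finset.sum_congr rfl fun u _ => Finset.sum_congr rfl fun v _ => ?_
        refine if_congr ?_ rfl rfl
        constructor
        · rintro ⟨h1, h2⟩; exact ⟨h1.symm, h2.symm⟩
        · rintro ⟨h1, h2⟩; exact ⟨h1.symm, h2.symm⟩
      have step_d : E1 = ∑ i : Fin k, (c i)^2 * (eCount G (C i) (C i)ᶜ : ℝ) := by
        rw [hE1, hpartsum (fun u => ∑ v : Fin n, (if G.Adj u v ∧ cl u ≠ cl v then (c (cl u))^2 else 0))]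
        refine Finset.sum_congr rfl fun i _ => ?_
        have inner2 : ∀ u ∈ C i,
            (∑ v : Fin n, (if G.Adj u v ∧ cl u ≠ cl v then (c (cl u))^2 else (0:ℝ)))
            = (c i)^2 * ∑ v ∈ (C i)ᶜ, (if G.Adj u v then (1:ℝ) else 0) := by
          intro u hu
          have hclu : cl u = i := hcluniq u i hu
          have inner : ∀ v : Fin n, (if G.Adj u v ∧ cl u ≠ cl v then (c (cl u))^2 else (0:ℝ))
              = if v ∈ (C i)ᶜ then (if G.Adj u v then (c i)^2 else 0) else 0 := by
            intro v
            by_cases hv : v ∈ (C i)ᶜ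
            · have hne : cl v ≠ i := (hcompl i v).1 hv
              by_cases hadj : G.Adj u v
              · rw [if_pos ⟨hadj, by rw [hclu]; exact fun h => hne h.symm⟩, if_pos hv,
                  if_pos hadj, hclu]
              · rw [if_neg (fun h => hadj h.1), if_pos hv, if_neg hadj]
            · have hclv : cl v = i := by
                by_contra h
                exact hv ((hcompl i v).2 h)
              rw [if_neg ?_, if_neg hv]
              rintro ⟨-, h2⟩
              exact h2 (by rw [hclu, hclv])
          rw [Finset.sum_congr rfl fun v (_ : v ∈ Finset.univ) => inner v,
            Finset.sum_ite_mem, Finset.univ_inter, Finset.mul_sum]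
          exact Finset.sum_congr rfl fun v _ => by split <;> ring
        rw [Finset.sum_congr rfl inner2, ← Finset.mul_sum]
        congr 1
        rw [eCount]
        push_cast
        rfl
      have step_e : (∑ i : Fin k, (c i)^2 * (eCount G (C i) (C i)ᶜ : ℝ))
          ≤ ε * d * ∑ v : Fin n, (y v)^2 := by
        have hy2 : (∑ v : Fin n, (y v)^2) = ∑ i : Fin k, ((C i).card : ℝ) * (c i)^2 := by
          rw [hpartsum (fun v => (y v)^2)]
          refine Finset.sum_congr rfl fun i _ => ?_
          rw [Finset.sum_congr rfl (fun v hv => by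
            simp only [hy]; rw [hcluniq v i hv] :
            ∀ v ∈ C i, (y v)^2 = (c i)^2)]
          rw [Finset.sum_const, nsmul_eq_mul]
        rw [hy2, Finset.mul_sum]
        refine Finset.sum_le_sum fun i _ => ?_
        calc (c i)^2 * (eCount G (C i) (C i)ᶜ : ℝ) ≤ (c i)^2 * (ε * ((d:ℝ) * (C i).card)) :=
            mul_le_mul_of_nonneg_left (houter i) (sq_nonneg _)
          _ = ε * (d:ℝ) * (((C i).card : ℝ) * (c i)^2) := by ring
      calc (∑ u : Fin n, ∑ v : Fin n, (if G.Adj u v then (y u - y v)^2 else 0))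
          ≤ _ := step_a
        _ = 2 * E1 + 2 * E2 := step_b
        _ = 4 * E1 := by rw [step_c]; ring
        _ = 4 * ∑ i : Fin k, (c i)^2 * (eCount G (C i) (C i)ᶜ : ℝ) := by rw [step_d]
        _ ≤ 4 * (ε * d * ∑ v : Fin n, (y v)^2) := by linarith [step_e]
        _ = 4 * ε * d * ∑ v : Fin n, (y v)^2 := by ring
    have hmid : y ⬝ᵥ (((1 : Matrix (Fin n) (Fin n) ℝ) - (d:ℝ)⁻¹ • G.adjMatrix ℝ) *ᵥ y)
        ≤ 2 * ε * ∑ v : Fin n, (y v)^2 := by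
      rw [hquad y]
      calc (2*(d:ℝ))⁻¹ * (∑ u : Fin n, ∑ v : Fin n, (if G.Adj u v then (y u - y v)^2 else 0))
          ≤ (2*(d:ℝ))⁻¹ * (4 * ε * d * ∑ v : Fin n, (y v)^2) :=
            mul_le_mul_of_nonneg_left hupp (by positivity)
        _ = 2 * ε * ∑ v : Fin n, (y v)^2 := by field_simp; ring
    have hfin := le_trans hlow hmid
    exact (mul_le_mul_iff_of_pos_right hy2pos).1 hfin
  refine ⟨part1, ?_⟩
  ---------------------------------------------------------------------------
  -- PART 2
  ---------------------------------------------------------------------------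
  set ext : (Fin (k+1) → ℝ) →ₗ[ℝ] (Fin n → ℝ) := {
    toFun := fun b => fun j => if h : (j:ℕ) < k+1 then b ⟨j.val, h⟩ else 0
    map_add' := by
      intro a b; funext j; by_cases h : (j:ℕ) ≤ k <;> simp [h]
    map_smul' := by
      intro m a; funext j; by_cases h : (j:ℕ) ≤ k <;> simp [h] } with hext
  set sumC : (Fin n → ℝ) →ₗ[ℝ] (Fin k → ℝ) := {
    toFun := fun x => fun i => ∑ v ∈ C i, x v
    map_add' := by
      intro a b; funext i; simp [Finset.sum_add_distrib]
    map_smul' := by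
      intro m a; funext i; simp [Finset.mul_sum] } with hsumC
  set ψ2 : (Fin (k+1) → ℝ) →ₗ[ℝ] (Fin k → ℝ) :=
    sumC ∘ₗ (Matrix.mulVecLin U) ∘ₗ ext with hψ2
  obtain ⟨b, hbker, hb0⟩ : ∃ b : Fin (k+1) → ℝ, ψ2 b = 0 ∧ b ≠ 0 := by
    have hni : ¬ Function.Injective ψ2 := by
      intro hinj
      have h1 := LinearMap.finrank_le_finrank_of_injective hinj
      rw [Module.finrank_fintype_fun_eq_card, Module.finrank_fintype_fun_eq_card] at h1
      simp only [Fintype.card_fin] at h1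
      omega
    rw [← LinearMap.ker_eq_bot] at hni
    obtain ⟨b, hb1, hb2⟩ := (Submodule.ne_bot_iff _).1 hni
    exact ⟨b, LinearMap.mem_ker.1 hb1, hb2⟩
  set b' : Fin n → ℝ := ext b with hb'
  set x : Fin n → ℝ := U *ᵥ b' with hx
  have hUx : Uᵀ *ᵥ x = b' := by
    rw [hx, Matrix.mulVec_mulVec, hUtU, Matrix.one_mulVec]
  have hb'def : ∀ j : Fin n, b' j = if h : (j:ℕ) < k+1 then b ⟨j.val, h⟩ else 0 := fun j => rfl
  have hxsum : ∀ i, ∑ v ∈ C i, x v = 0 := by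
    intro i
    have h1 : ψ2 b i = 0 := by rw [hbker]; rfl
    have h2 : ψ2 b i = ∑ v ∈ C i, x v := rfl
    rw [← h2, h1]
  have hx2 : (∑ v : Fin n, (x v)^2) = ∑ j : Fin n, (b' j)^2 := by
    rw [← hnorm x, hUx]
  have hx2pos : 0 < ∑ v : Fin n, (x v)^2 := by
    rw [hx2]
    obtain ⟨i, hi⟩ := Function.ne_iff.1 hb0
    have hilt : ((⟨i.val, by omega⟩ : Fin n) : ℕ) < k + 1 := by
      simpa using i.isLt
    refine Finset.sum_pos' (fun j _ => sq_nonneg _) ⟨⟨i.val, by omega⟩, Finset.mem_univ _, ?_⟩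
    rw [hb'def, dif_pos hilt]
    have : (⟨(⟨i.val, by omega⟩ : Fin n).val, hilt⟩ : Fin (k+1)) = i := by
      apply Fin.ext
      rfl
    rw [this]
    have hbi : b i ≠ 0 := hi
    positivity
  -- spectral upper bound
  have hupp2 : x ⬝ᵥ (((1 : Matrix (Fin n) (Fin n) ℝ) - (d:ℝ)⁻¹ • G.adjMatrix ℝ) *ᵥ x)
      ≤ lam ⟨k, hkn⟩ * ∑ v : Fin n, (x v)^2 := by
    rw [hspec x, hx2, hUx, Finset.mul_sum]
    refine Finset.sum_le_sum fun j _ => ?_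
    by_cases hj : (j:ℕ) < k+1
    · have hle : j ≤ (⟨k, hkn⟩ : Fin n) := by
        rw [Fin.le_def]
        simpa using Nat.lt_succ_iff.1 hj
      exact mul_le_mul_of_nonneg_right (hmono hle) (sq_nonneg _)
    · rw [hb'def, dif_neg hj]
      simp
  -- combinatorial lower bound
  have hQlow : φ^2 * d * ∑ v : Fin n, (x v)^2 ≤
      ∑ u : Fin n, ∑ v : Fin n, (if G.Adj u v then (x u - x v)^2 else 0) := by
    have hdegC : ∀ i : Fin k, ∀ u, (∑ v ∈ C i, if G.Adj u v then (1:ℝ) else 0) ≤ d := by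
      intro i u
      calc (∑ v ∈ C i, if G.Adj u v then (1:ℝ) else 0)
          ≤ ∑ v : Fin n, if G.Adj u v then (1:ℝ) else 0 :=
            Finset.sum_le_sum_of_subset_of_nonneg (Finset.subset_univ _)
              (fun v _ _ => by split <;> norm_num)
        _ = d := hdeg u
    have hclust : ∀ i : Fin k, φ^2 * d * (∑ v ∈ C i, (x v)^2) ≤
        ∑ u ∈ C i, ∑ v ∈ C i, (if G.Adj u v then (x u - x v)^2 else 0) :=
      fun i => cheeger_cluster d φ hφ.le G (C i) (hCne i) (hdegC i) (hinner i) x (hxsum i)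
    have hdrop : (∑ i : Fin k, ∑ u ∈ C i, ∑ v ∈ C i, (if G.Adj u v then (x u - x v)^2 else 0))
        ≤ ∑ u : Fin n, ∑ v : Fin n, (if G.Adj u v then (x u - x v)^2 else 0) := by
      rw [hpartsum (fun u => ∑ v : Fin n, (if G.Adj u v then (x u - x v)^2 else 0))]
      refine Finset.sum_le_sum fun i _ => Finset.sum_le_sum fun u _ => ?_
      refine Finset.sum_le_sum_of_subset_of_nonneg (Finset.subset_univ _)
        (fun v _ _ => by split <;> [exact sq_nonneg _; exact le_refl 0])
    calc φ^2 * d * ∑ v : Fin n, (x v)^2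
        = ∑ i : Fin k, φ^2 * d * (∑ v ∈ C i, (x v)^2) := by
          rw [hpartsum (fun v => (x v)^2), Finset.mul_sum]
      _ ≤ ∑ i : Fin k, ∑ u ∈ C i, ∑ v ∈ C i, (if G.Adj u v then (x u - x v)^2 else 0) :=
          Finset.sum_le_sum fun i _ => hclust i
      _ ≤ _ := hdrop
  have hmid2 : φ^2/2 * ∑ v : Fin n, (x v)^2 ≤
      x ⬝ᵥ (((1 : Matrix (Fin n) (Fin n) ℝ) - (d:ℝ)⁻¹ • G.adjMatrix ℝ) *ᵥ x) := by
    rw [hquad x]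
    calc φ^2/2 * ∑ v : Fin n, (x v)^2
        = (2*(d:ℝ))⁻¹ * (φ^2 * d * ∑ v : Fin n, (x v)^2) := by field_simp
      _ ≤ (2*(d:ℝ))⁻¹ * ∑ u : Fin n, ∑ v : Fin n, (if G.Adj u v then (x u - x v)^2 else 0) :=
          mul_le_mul_of_nonneg_left hQlow (by positivity)
  have hfin2 := le_trans hmid2 hupp2
  exact (mul_le_mul_iff_of_pos_right hx2pos).1 hfin2
end
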